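/- arXiv:2512.18398 — 5 statements merged into one kernel-verified Lean document; each statement's English description precedes it below -/
import Mathlib

section
/- Let (X, 𝒜, μ) be a finite complete measure space, H a Hilbert space, A ⊆ H × H a maximal monotone graph, (xₙ) a sequence in L⁰(μ; H) converging to x in measure, and (yₙ) a sequence in L¹(μ; H) converging weakly in L¹(μ; H) to y, such that (xₙ(ω), yₙ(ω)) ∈ A for μ-a.e. ω and every n. Then (x(ω), y(ω)) ∈ A for μ-a.e. ω. -/
open MeasureTheory Filter
open scoped ENNReal RealInnerProductSpace

set_option linter.unusedSectionVars false
set_option maxHeartbeats 1000000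

section aux
variable {X : Type*} [MeasurableSpace X] {μ : Measure X} [IsFiniteMeasure μ]
variable {H : Type*} [NormedAddCommGroup H] [InnerProductSpace ℝ H] [CompleteSpace H]
variable [MeasurableSpace H] [BorelSpace H]

lemma geom_tsum_ne_top {c : ℝ} (h0 : 0 ≤ c) (h1 : c < 1) :
    ∑' k : ℕ, ENNReal.ofReal (c ^ k) ≠ ∞ := by
  have heq : ∀ k : ℕ, ENNReal.ofReal (c ^ k) = (ENNReal.ofReal c) ^ k := fun k =>
    ENNReal.ofReal_pow h0 k
  rw [tsum_congr heq, ENNReal.tsum_geometric]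
  rw [ENNReal.inv_ne_top]
  intro hz
  rw [tsub_eq_zero_iff_le] at hz
  exact absurd (lt_of_lt_of_le (ENNReal.ofReal_lt_one.mpr h1) hz) (lt_irrefl _)

omit [IsFiniteMeasure μ] [InnerProductSpace ℝ H] [CompleteSpace H] [MeasurableSpace H] [BorelSpace H] in
lemma linf_ae_bound (f : Lp H ∞ μ) : ∀ᵐ ω ∂μ, ‖f ω‖ ≤ ‖f‖ := by
  have h1 := enorm_ae_le_eLpNormEssSup (⇑f) μ
  have h2 : eLpNorm (⇑f) ∞ μ ≠ ∞ := Lp.eLpNorm_ne_top f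
  rw [eLpNorm_exponent_top] at h2
  filter_upwards [h1] with ω hω
  rw [Lp.norm_def, eLpNorm_exponent_top]
  have : ‖f ω‖ = ((‖f ω‖₊ : ℝ≥0∞)).toReal := by simp
  rw [this]
  exact ENNReal.toReal_mono h2 hω

omit [IsFiniteMeasure μ] [CompleteSpace H] [MeasurableSpace H] [BorelSpace H] in
lemma pair_integrable {g : X → H} (hg : Integrable g μ) (f : Lp H ∞ μ) :
    Integrable (fun ω => ⟪g ω, f ω⟫) μ := by
  refine Integrable.mono' (hg.norm.mul_const ‖f‖) (hg.1.inner (Lp.aestronglyMeasurable f)) ?_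
  filter_upwards [linf_ae_bound f] with ω hω
  calc ‖⟪g ω, f ω⟫‖ ≤ ‖g ω‖ * ‖f ω‖ := norm_inner_le_norm _ _
  _ ≤ ‖g ω‖ * ‖f‖ := mul_le_mul_of_nonneg_left hω (norm_nonneg _)

lemma uniform_L1_bound
    (yn : ℕ → X → H) (y : X → H)
    (hynint : ∀ n, Integrable (yn n) μ)
    (hweak : ∀ ψ : X → H, Measurable ψ → (∃ C : ℝ, ∀ ω, ‖ψ ω‖ ≤ C) →
      Tendsto (fun n => ∫ ω, ⟪yn n ω, ψ ω⟫ ∂μ) atTop (nhds (∫ ω, ⟪y ω, ψ ω⟫ ∂μ))) :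
    ∃ M : ℝ, ∀ n, ∫ ω, ‖yn n ω‖ ∂μ ≤ M := by
  haveI : Fact ((1:ℝ≥0∞) ≤ ∞) := ⟨le_top⟩
  have hTlin : ∀ n : ℕ, ∃ T : Lp H ∞ μ →L[ℝ] ℝ,
      (∀ f, T f = ∫ ω, ⟪yn n ω, f ω⟫ ∂μ) := by
    intro n
    have hadd : ∀ f g : Lp H ∞ μ, (∫ ω, ⟪yn n ω, (f + g : Lp H ∞ μ) ω⟫ ∂μ)
        = (∫ ω, ⟪yn n ω, f ω⟫ ∂μ) + ∫ ω, ⟪yn n ω, g ω⟫ ∂μ := by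
      intro f g
      have h1 : (fun ω => ⟪yn n ω, (f + g : Lp H ∞ μ) ω⟫)
          =ᵐ[μ] fun ω => ⟪yn n ω, f ω⟫ + ⟪yn n ω, g ω⟫ := by
        filter_upwards [Lp.coeFn_add f g] with ω hω
        rw [hω, Pi.add_apply, inner_add_right]
      rw [integral_congr_ae h1]
      exact integral_add (pair_integrable (hynint n) f) (pair_integrable (hynint n) g)
    have hsmul : ∀ (c : ℝ) (f : Lp H ∞ μ), (∫ ω, ⟪yn n ω, (c • f : Lp H ∞ μ) ω⟫ ∂μ)
        = c * ∫ ω, ⟪yn n ω, f ω⟫ ∂μ := by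
      intro c f
      have h1 : (fun ω => ⟪yn n ω, (c • f : Lp H ∞ μ) ω⟫)
          =ᵐ[μ] fun ω => c * ⟪yn n ω, f ω⟫ := by
        filter_upwards [Lp.coeFn_smul c f] with ω hω
        rw [hω, Pi.smul_apply, real_inner_smul_right]
      rw [integral_congr_ae h1, integral_const_mul]
    refine ⟨LinearMap.mkContinuous
      { toFun := fun f => ∫ ω, ⟪yn n ω, f ω⟫ ∂μ
        map_add' := hadd
        map_smul' := hsmul } (∫ ω, ‖yn n ω‖ ∂μ) ?_, fun f => rfl⟩
    intro f
    simp only [LinearMap.coe_mk, AddHom.coe_mk]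
    calc ‖∫ ω, ⟪yn n ω, f ω⟫ ∂μ‖ ≤ ∫ ω, ‖⟪yn n ω, f ω⟫‖ ∂μ :=
          norm_integral_le_integral_norm _
    _ ≤ ∫ ω, ‖yn n ω‖ * ‖f‖ ∂μ := by
          refine integral_mono_ae ((pair_integrable (hynint n) f).norm)
            ((hynint n).norm.mul_const ‖f‖) ?_
          filter_upwards [linf_ae_bound f] with ω hω
          calc ‖⟪yn n ω, f ω⟫‖ ≤ ‖yn n ω‖ * ‖f ω‖ := norm_inner_le_norm _ _
          _ ≤ ‖yn n ω‖ * ‖f‖ := mul_le_mul_of_nonneg_left hω (norm_nonneg _)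
    _ = (∫ ω, ‖yn n ω‖ ∂μ) * ‖f‖ := by rw [integral_mul_const]
  choose T hT using hTlin
  have hpt : ∀ f : Lp H ∞ μ, ∃ C : ℝ, ∀ n, ‖T n f‖ ≤ C := by
    intro f
    set g := (Lp.aestronglyMeasurable f).mk f with hgdef
    have hgsm : StronglyMeasurable g := (Lp.aestronglyMeasurable f).stronglyMeasurable_mk
    have hfg : ⇑f =ᵐ[μ] g := (Lp.aestronglyMeasurable f).ae_eq_mk
    set S : Set X := {ω | ‖g ω‖ ≤ ‖f‖} with hSdef
    have hS : MeasurableSet S := measurableSet_le hgsm.norm.measurable measurable_const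
    set ψ : X → H := S.indicator g with hψdef
    have hψm : Measurable ψ := hgsm.measurable.indicator hS
    have hψb : ∃ C : ℝ, ∀ ω, ‖ψ ω‖ ≤ C := by
      refine ⟨max ‖f‖ 0, fun ω => ?_⟩
      by_cases h : ω ∈ S
      · rw [hψdef, Set.indicator_of_mem h]; exact le_max_of_le_left h
      · rw [hψdef, Set.indicator_of_notMem h]; simp
    have hψf : ψ =ᵐ[μ] f := by
      filter_upwards [linf_ae_bound f, hfg] with ω h1 h2
      have hmem : ω ∈ S := by rw [hSdef]; simp only [Set.mem_setOf_eq]; rw [← h2]; exact h1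
      rw [hψdef, Set.indicator_of_mem hmem, ← h2]
    have htend := hweak ψ hψm hψb
    have heq : ∀ n, T n f = ∫ ω, ⟪yn n ω, ψ ω⟫ ∂μ := by
      intro n
      rw [hT n f]
      refine integral_congr_ae ?_
      filter_upwards [hψf] with ω hω
      rw [hω]
    have habs : Tendsto (fun n => ‖(∫ ω, ⟪yn n ω, ψ ω⟫ ∂μ)‖) atTop
        (nhds ‖(∫ ω, ⟪y ω, ψ ω⟫ ∂μ)‖) := htend.norm
    obtain ⟨C, hC⟩ := habs.bddAbove_range
    refine ⟨C, fun n => ?_⟩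
    rw [heq n]
    exact hC (Set.mem_range_self n)
  obtain ⟨C', hC'⟩ := banach_steinhaus hpt
  refine ⟨C' + (μ Set.univ).toReal, fun n => ?_⟩
  have hgm : AEStronglyMeasurable (yn n) μ := (hynint n).1
  set g := hgm.mk (yn n) with hgdef
  have hgsm : StronglyMeasurable g := hgm.stronglyMeasurable_mk
  have hfg : yn n =ᵐ[μ] g := hgm.ae_eq_mk
  have hgint : Integrable g μ := (hynint n).congr hfg
  set c : X → ℝ := fun ω => (max ‖g ω‖ 1)⁻¹ with hcdef
  have hcm : Measurable c := ((hgsm.measurable.norm).max measurable_const).inv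
  set φ : X → H := fun ω => c ω • g ω with hφdef
  have hφsm : StronglyMeasurable φ := (hcm.stronglyMeasurable).smul hgsm
  have hφb : ∀ ω, ‖φ ω‖ ≤ 1 := by
    intro ω
    have h1 : (0:ℝ) < max ‖g ω‖ 1 := lt_of_lt_of_le one_pos (le_max_right _ _)
    have : ‖φ ω‖ = (max ‖g ω‖ 1)⁻¹ * ‖g ω‖ := by
      rw [hφdef]
      simp only [norm_smul, hcdef, norm_inv, Real.norm_eq_abs, abs_of_pos h1]
    rw [this, inv_mul_le_iff₀ h1, mul_one]
    exact le_max_left _ _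
  have hφmem : MemLp φ ∞ μ := memLp_top_of_bound hφsm.aestronglyMeasurable 1
    (Eventually.of_forall hφb)
  set fLp : Lp H ∞ μ := hφmem.toLp φ with hfLpdef
  have hcoe : ∀ᵐ ω ∂μ, fLp ω = φ ω := hφmem.coeFn_toLp
  have hfLpnorm : ‖fLp‖ ≤ 1 := by
    rw [hfLpdef, Lp.norm_toLp]
    have hb := eLpNorm_le_of_ae_bound (μ := μ) (p := ∞) (f := φ) (C := 1)
      (Eventually.of_forall hφb)
    calc (eLpNorm φ ∞ μ).toReal
        ≤ ((μ Set.univ) ^ ((∞:ℝ≥0∞).toReal)⁻¹ * ENNReal.ofReal 1).toReal := by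
          apply ENNReal.toReal_mono _ hb
          simp [ENNReal.mul_ne_top, measure_ne_top]
    _ ≤ 1 := by simp
  have hTf : T n fLp = ∫ ω, c ω * ‖g ω‖^2 ∂μ := by
    rw [hT n fLp]
    refine integral_congr_ae ?_
    filter_upwards [hcoe, hfg] with ω h1 h2
    rw [h1, h2, hφdef, real_inner_smul_right, real_inner_self_eq_norm_sq]
  have hint1 : Integrable (fun ω => c ω * ‖g ω‖^2) μ := by
    refine (pair_integrable (hynint n) fLp).congr ?_
    filter_upwards [hcoe, hfg] with ω h1 h2
    rw [h1, h2, hφdef, real_inner_smul_right, real_inner_self_eq_norm_sq]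
  have hgnormint : Integrable (fun ω => ‖g ω‖) μ := hgint.norm
  have hint2 : Integrable (fun ω => ‖g ω‖ - 1) μ := hgnormint.sub (integrable_const 1)
  have hmono : ∫ ω, ‖g ω‖ - 1 ∂μ ≤ ∫ ω, c ω * ‖g ω‖^2 ∂μ := by
    refine integral_mono hint2 hint1 ?_
    intro ω
    simp only [hcdef]
    rcases le_or_gt ‖g ω‖ 1 with h | h
    · have h0 : (0:ℝ) ≤ (max ‖g ω‖ 1)⁻¹ * ‖g ω‖^2 := by positivity
      linarith
    · have hmax : max ‖g ω‖ 1 = ‖g ω‖ := max_eq_left h.le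
      rw [hmax]
      have hne : ‖g ω‖ ≠ 0 := by positivity
      rw [pow_two, inv_mul_cancel_left₀ hne]
      linarith
  have hTop : T n fLp ≤ C' := by
    calc T n fLp ≤ ‖T n fLp‖ := le_abs_self _
    _ ≤ ‖T n‖ * ‖fLp‖ := (T n).le_opNorm fLp
    _ ≤ C' * 1 := by
        apply mul_le_mul (hC' n) hfLpnorm (norm_nonneg _)
        exact le_trans (norm_nonneg _) (hC' n)
    _ = C' := mul_one _
  have hfin : ∫ ω, ‖g ω‖ - 1 ∂μ ≤ C' := by rw [hTf] at hTop; exact le_trans hmono hTop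
  have h2 : ∫ ω, ‖yn n ω‖ ∂μ = ∫ ω, ‖g ω‖ ∂μ :=
    integral_congr_ae (hfg.mono fun ω h => by simp [h])
  have h3 : ∫ ω, ‖g ω‖ - 1 ∂μ = ∫ ω, ‖g ω‖ ∂μ - (μ Set.univ).toReal := by
    rw [integral_sub hgnormint (integrable_const 1)]
    simp; rfl
  linarith


/-- Any continuous linear functional on `L¹(μ;H)` is represented, on integrable functions,
by integration against a bounded measurable function. -/
lemma dual_repr (φ : Lp H 1 μ →L[ℝ] ℝ) :
    ∃ ψ : X → H, Measurable ψ ∧ (∃ C : ℝ, ∀ ω, ‖ψ ω‖ ≤ C) ∧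
      ∀ (g : X → H) (hg : Integrable g μ), φ (hg.toL1 g) = ∫ ω, ⟪g ω, ψ ω⟫ ∂μ := by
  -- the inclusion L² → L¹
  have hmem1 : ∀ f : Lp H 2 μ, MemLp (⇑f) 1 μ :=
    fun f => (Lp.memLp f).mono_exponent (by norm_num)
  set ι : Lp H 2 μ → Lp H 1 μ := fun f => (hmem1 f).toLp f with hιdef
  have hιcoe : ∀ f, (ι f : X → H) =ᵐ[μ] f := fun f => (hmem1 f).coeFn_toLp
  have hιnorm : ∀ f, ‖ι f‖ = ∫ ω, ‖f ω‖ ∂μ := by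
    intro f
    rw [L1.norm_eq_integral_norm]
    refine integral_congr_ae ?_
    filter_upwards [hιcoe f] with ω hω using by simp [hω]
  set κ : ℝ := ((μ Set.univ) ^ ((1:ℝ)/(1:ℝ≥0∞).toReal - 1/(2:ℝ≥0∞).toReal)).toReal with hκdef
  have hιbound : ∀ f : Lp H 2 μ, ‖ι f‖ ≤ κ * ‖f‖ := by
    intro f
    have h := eLpNorm_le_eLpNorm_mul_rpow_measure_univ (p := 1) (q := 2) (by norm_num)
      (Lp.aestronglyMeasurable f)
    have h2 : eLpNorm (⇑f) 1 μ ≠ ∞ := (hmem1 f).2.ne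
    have h3 : (eLpNorm (⇑f) 2 μ * μ Set.univ ^ ((1:ℝ)/(1:ℝ≥0∞).toReal - 1/(2:ℝ≥0∞).toReal)) ≠ ∞ :=
      ENNReal.mul_ne_top (Lp.eLpNorm_ne_top f)
        (by
          refine ENNReal.rpow_ne_top_of_nonneg ?_ (measure_ne_top μ _)
          norm_num)
    have h4 : ‖ι f‖ = (eLpNorm (⇑f) 1 μ).toReal := by
      rw [hιdef, Lp.norm_toLp]
    rw [h4]
    calc (eLpNorm (⇑f) 1 μ).toReal
        ≤ (eLpNorm (⇑f) 2 μ * μ Set.univ ^ ((1:ℝ)/(1:ℝ≥0∞).toReal - 1/(2:ℝ≥0∞).toReal)).toReal := by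
          apply ENNReal.toReal_mono h3
          simpa using h
    _ = κ * ‖f‖ := by
          rw [ENNReal.toReal_mul, hκdef, Lp.norm_def, mul_comm]
  -- the functional on L²
  have hχex : ∃ χ : Lp H 2 μ →L[ℝ] ℝ, ∀ f, χ f = φ (ι f) := by
    have hadd : ∀ f g : Lp H 2 μ, ι (f + g) = ι f + ι g := by
      intro f g
      rw [hιdef]
      have : ((hmem1 f).add (hmem1 g)).toLp (⇑f + ⇑g) = (hmem1 f).toLp f + (hmem1 g).toLp g :=
        MemLp.toLp_add _ _
      rw [← this]
      exact MemLp.toLp_congr _ _ (Lp.coeFn_add f g)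
    have hsmul : ∀ (c : ℝ) (f : Lp H 2 μ), ι (c • f) = c • ι f := by
      intro c f
      rw [hιdef]
      have : ((hmem1 f).const_smul c).toLp (c • ⇑f) = c • (hmem1 f).toLp f :=
        MemLp.toLp_const_smul _ _
      rw [← this]
      exact MemLp.toLp_congr _ _ (Lp.coeFn_smul c f)
    refine ⟨LinearMap.mkContinuous
      { toFun := fun f => φ (ι f)
        map_add' := fun f g => by
          show φ (ι (f + g)) = φ (ι f) + φ (ι g)
          rw [hadd, map_add]
        map_smul' := fun c f => by
          show φ (ι (c • f)) = c • φ (ι f)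
          rw [hsmul, ContinuousLinearMap.map_smul] } (‖φ‖ * κ) ?_, fun f => rfl⟩
    intro f
    simp only [LinearMap.coe_mk, AddHom.coe_mk]
    calc ‖φ (ι f)‖ ≤ ‖φ‖ * ‖ι f‖ := φ.le_opNorm _
    _ ≤ ‖φ‖ * (κ * ‖f‖) := mul_le_mul_of_nonneg_left (hιbound f) (norm_nonneg φ)
    _ = ‖φ‖ * κ * ‖f‖ := by ring
  obtain ⟨χ, hχ⟩ := hχex
  set ψ2 : Lp H 2 μ := (InnerProductSpace.toDual ℝ (Lp H 2 μ)).symm χ with hψ2def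
  have hrep : ∀ f : Lp H 2 μ, ⟪ψ2, f⟫ = φ (ι f) := by
    intro f
    rw [hψ2def, InnerProductSpace.toDual_symm_apply, hχ]
  -- measurable representative of ψ2
  set ψt : X → H := (Lp.aestronglyMeasurable ψ2).mk ψ2 with hψtdef
  have hψtsm : StronglyMeasurable ψt := (Lp.aestronglyMeasurable ψ2).stronglyMeasurable_mk
  have hψtae : ⇑ψ2 =ᵐ[μ] ψt := (Lp.aestronglyMeasurable ψ2).ae_eq_mk
  set B : ℝ := ‖φ‖ with hBdef
  have hB0 : 0 ≤ B := norm_nonneg φ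
  -- integrability facts
  have hψt2int : Integrable (fun ω => ‖ψt ω‖^2) μ := by
    refine (L2.integrable_inner (𝕜 := ℝ) ψ2 ψ2).congr ?_
    filter_upwards [hψtae] with ω hω
    rw [hω, real_inner_self_eq_norm_sq]
  have hψt1int : Integrable (fun ω => ‖ψt ω‖) μ := by
    have h1 : MemLp (⇑ψ2) 1 μ := (Lp.memLp ψ2).mono_exponent (by norm_num)
    exact ((memLp_one_iff_integrable.mp h1).congr hψtae).norm
  -- essential bound for ψt
  have hbd : ∀ᵐ ω ∂μ, ‖ψt ω‖ ≤ B := by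
    have hEm : ∀ m : ℕ, ∀ᵐ ω ∂μ, ¬ (B + 1/(m+1) ≤ ‖ψt ω‖) := by
      intro m
      set ε : ℝ := 1/(m+1) with hεdef
      have hε : 0 < ε := by positivity
      set E : Set X := {ω | B + ε ≤ ‖ψt ω‖} with hEdef
      have hE : MeasurableSet E := measurableSet_le measurable_const hψtsm.norm.measurable
      have hmem2 : MemLp (E.indicator ψt) 2 μ :=
        (((Lp.memLp ψ2).ae_eq hψtae)).indicator hE
      set fE : Lp H 2 μ := hmem2.toLp _ with hfEdef
      have hfEcoe : ∀ᵐ ω ∂μ, fE ω = E.indicator ψt ω := hmem2.coeFn_toLp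
      have h1 : ⟪ψ2, fE⟫ = ∫ ω, E.indicator (fun ω => ‖ψt ω‖^2) ω ∂μ := by
        rw [L2.inner_def]
        refine integral_congr_ae ?_
        filter_upwards [hψtae, hfEcoe] with ω h1 h2
        rw [h1, h2]
        by_cases h : ω ∈ E
        · rw [Set.indicator_of_mem h, Set.indicator_of_mem h, real_inner_self_eq_norm_sq]
        · rw [Set.indicator_of_notMem h, Set.indicator_of_notMem h, inner_zero_right]
      have h2 : ‖ι fE‖ = ∫ ω, E.indicator (fun ω => ‖ψt ω‖) ω ∂μ := by
        rw [hιnorm]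
        refine integral_congr_ae ?_
        filter_upwards [hfEcoe] with ω hω
        rw [hω, norm_indicator_eq_indicator_norm]
      have key : ∫ ω, E.indicator (fun ω => ‖ψt ω‖^2) ω ∂μ
          ≤ B * ∫ ω, E.indicator (fun ω => ‖ψt ω‖) ω ∂μ := by
        rw [← h1, ← h2, hrep]
        calc φ (ι fE) ≤ ‖φ (ι fE)‖ := le_abs_self _
        _ ≤ ‖φ‖ * ‖ι fE‖ := φ.le_opNorm _
      have hpt : ∀ ω, (B + ε) * E.indicator (fun ω => ‖ψt ω‖) ω
          ≤ E.indicator (fun ω => ‖ψt ω‖^2) ω := by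
        intro ω
        by_cases h : ω ∈ E
        · rw [Set.indicator_of_mem h, Set.indicator_of_mem h]
          have hge : B + ε ≤ ‖ψt ω‖ := h
          have : (B + ε) * ‖ψt ω‖ ≤ ‖ψt ω‖ * ‖ψt ω‖ :=
            mul_le_mul_of_nonneg_right hge (norm_nonneg _)
          calc (B + ε) * ‖ψt ω‖ ≤ ‖ψt ω‖ * ‖ψt ω‖ := this
          _ = ‖ψt ω‖^2 := (pow_two _).symm
        · rw [Set.indicator_of_notMem h, Set.indicator_of_notMem h]
          simp
      have hI1int : Integrable (fun ω => E.indicator (fun ω => ‖ψt ω‖) ω) μ :=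
        hψt1int.indicator hE
      have hI2int : Integrable (fun ω => E.indicator (fun ω => ‖ψt ω‖^2) ω) μ :=
        hψt2int.indicator hE
      have hmono2 : (B + ε) * ∫ ω, E.indicator (fun ω => ‖ψt ω‖) ω ∂μ
          ≤ ∫ ω, E.indicator (fun ω => ‖ψt ω‖^2) ω ∂μ := by
        rw [← integral_const_mul]
        exact integral_mono (hI1int.const_mul _) hI2int hpt
      have hI1nonneg : 0 ≤ ∫ ω, E.indicator (fun ω => ‖ψt ω‖) ω ∂μ := by
        refine integral_nonneg ?_
        intro ω
        exact Set.indicator_nonneg (fun ω _ => norm_nonneg _) ω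
      have hI1zero : ∫ ω, E.indicator (fun ω => ‖ψt ω‖) ω ∂μ = 0 := by nlinarith
      have haez := (integral_eq_zero_iff_of_nonneg
        (fun ω => Set.indicator_nonneg (fun ω _ => norm_nonneg _) ω) hI1int).mp hI1zero
      have haez' : ∀ᵐ ω ∂μ, E.indicator (fun ω => ‖ψt ω‖) ω = 0 := haez
      filter_upwards [haez'] with ω hω
      intro hcon
      have hmemE : ω ∈ E := hcon
      rw [Set.indicator_of_mem hmemE] at hω
      have : B + ε ≤ ‖ψt ω‖ := hmemE
      rw [hω] at this
      linarith
    rw [← ae_all_iff] at hEm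
    filter_upwards [hEm] with ω hω
    by_contra hcon
    push_neg at hcon
    obtain ⟨m, hm⟩ := exists_nat_one_div_lt (by linarith : 0 < ‖ψt ω‖ - B)
    exact hω m (by push_cast; push_cast at hm; linarith)
  -- the bounded measurable representative
  set G : Set X := {ω | ‖ψt ω‖ ≤ B} with hGdef
  have hG : MeasurableSet G := measurableSet_le hψtsm.norm.measurable measurable_const
  set ψs : X → H := G.indicator ψt with hψsdef
  have hψsm : Measurable ψs := hψtsm.measurable.indicator hG
  have hψssm : StronglyMeasurable ψs := hψtsm.indicator hG
  have hψsb : ∀ ω, ‖ψs ω‖ ≤ B := by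
    intro ω
    by_cases h : ω ∈ G
    · rw [hψsdef, Set.indicator_of_mem h]; exact h
    · rw [hψsdef, Set.indicator_of_notMem h]; simpa using hB0
  have hψsae : ⇑ψ2 =ᵐ[μ] ψs := by
    filter_upwards [hψtae, hbd] with ω h1 h2
    rw [h1, hψsdef, Set.indicator_of_mem (by exact h2 : ω ∈ G)]
  refine ⟨ψs, hψsm, ⟨B, hψsb⟩, ?_⟩
  intro g hg
  set gt : X → H := hg.1.mk g with hgtdef
  have hgtsm : StronglyMeasurable gt := hg.1.stronglyMeasurable_mk
  have hgae : g =ᵐ[μ] gt := hg.1.ae_eq_mk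
  have hgtint : Integrable gt μ := hg.congr hgae
  set S : ℕ → Set X := fun R => {ω | ‖gt ω‖ ≤ (R:ℝ)} with hSdef
  have hS : ∀ R, MeasurableSet (S R) := fun R =>
    measurableSet_le hgtsm.norm.measurable measurable_const
  set gR : ℕ → X → H := fun R => (S R).indicator gt with hgRdef
  have hgRsm : ∀ R, StronglyMeasurable (gR R) := fun R => hgtsm.indicator (hS R)
  have hgRb : ∀ R ω, ‖gR R ω‖ ≤ (R:ℝ) := by
    intro R ω
    by_cases h : ω ∈ S R
    · simp only [hgRdef]; rw [Set.indicator_of_mem h]; exact h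
    · simp only [hgRdef]; rw [Set.indicator_of_notMem h]; simp
  have hgRmem2 : ∀ R, MemLp (gR R) 2 μ := by
    intro R
    exact ((memLp_top_of_bound (hgRsm R).aestronglyMeasurable _
      (Eventually.of_forall (hgRb R)))).mono_exponent le_top
  have hgRlim : ∀ ω, ∀ᶠ R in atTop, gR R ω = gt ω := by
    intro ω
    obtain ⟨R0, hR0⟩ := exists_nat_ge ‖gt ω‖
    filter_upwards [eventually_ge_atTop R0] with R hR
    have : ω ∈ S R := by
      rw [hSdef]
      simp only [Set.mem_setOf_eq]
      calc ‖gt ω‖ ≤ (R0:ℝ) := hR0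
      _ ≤ (R:ℝ) := by exact_mod_cast hR
    simp only [hgRdef]; rw [Set.indicator_of_mem this]
  -- identify φ on truncations
  have hkey : ∀ R, φ (ι ((hgRmem2 R).toLp (gR R))) = ∫ ω, ⟪gR R ω, ψs ω⟫ ∂μ := by
    intro R
    rw [← hrep]
    rw [L2.inner_def]
    refine integral_congr_ae ?_
    filter_upwards [hψsae, (hgRmem2 R).coeFn_toLp] with ω h1 h2
    rw [h2, ← h1]
    exact real_inner_comm _ _
  -- limit of left hand sides
  have hL1lim : Tendsto (fun R => ι ((hgRmem2 R).toLp (gR R))) atTop (nhds (hg.toL1 g)) := by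
    rw [tendsto_iff_norm_sub_tendsto_zero]
    have heqnorm : ∀ R, ‖ι ((hgRmem2 R).toLp (gR R)) - hg.toL1 g‖
        = ∫ ω, ‖gR R ω - gt ω‖ ∂μ := by
      intro R
      rw [L1.norm_eq_integral_norm]
      refine integral_congr_ae ?_
      filter_upwards [Lp.coeFn_sub (ι ((hgRmem2 R).toLp (gR R))) (hg.toL1 g),
        hιcoe ((hgRmem2 R).toLp (gR R)), (hgRmem2 R).coeFn_toLp, hg.coeFn_toL1, hgae]
        with ω h1 h2 h3 h4 h5
      rw [h1, Pi.sub_apply, h2, h3, h4, h5]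
    have hDCT : Tendsto (fun R => ∫ ω, ‖gR R ω - gt ω‖ ∂μ) atTop (nhds (∫ ω, (0:ℝ) ∂μ)) := by
      refine tendsto_integral_of_dominated_convergence (fun ω => ‖gt ω‖)
        (fun R => ((hgRsm R).sub hgtsm).norm.aestronglyMeasurable) hgtint.norm ?_ ?_
      · intro R
        refine Eventually.of_forall (fun ω => ?_)
        by_cases h : ω ∈ S R
        · simp only [hgRdef]; rw [Set.indicator_of_mem h]
          simp
        · simp only [hgRdef]; rw [Set.indicator_of_notMem h]
          simp
      · refine Eventually.of_forall (fun ω => ?_)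
        refine Tendsto.congr' ?_ tendsto_const_nhds
        filter_upwards [hgRlim ω] with R hR
        rw [hR]
        simp
    rw [integral_zero] at hDCT
    refine hDCT.congr ?_
    intro R
    rw [heqnorm R]
  -- limit of right hand sides
  have hRlim : Tendsto (fun R => ∫ ω, ⟪gR R ω, ψs ω⟫ ∂μ) atTop
      (nhds (∫ ω, ⟪gt ω, ψs ω⟫ ∂μ)) := by
    refine tendsto_integral_of_dominated_convergence (fun ω => ‖gt ω‖ * B)
      (fun R => (hgRsm R).aestronglyMeasurable.inner hψssm.aestronglyMeasurable)
      (hgtint.norm.mul_const B) ?_ ?_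
    · intro R
      refine Eventually.of_forall (fun ω => ?_)
      calc ‖⟪gR R ω, ψs ω⟫‖ ≤ ‖gR R ω‖ * ‖ψs ω‖ := norm_inner_le_norm _ _
      _ ≤ ‖gt ω‖ * B := by
          refine mul_le_mul ?_ (hψsb ω) (norm_nonneg _) (norm_nonneg _)
          by_cases h : ω ∈ S R
          · simp only [hgRdef]; rw [Set.indicator_of_mem h]
          · simp only [hgRdef]; rw [Set.indicator_of_notMem h]; simp
    · refine Eventually.of_forall (fun ω => ?_)
      refine Tendsto.congr' ?_ tendsto_const_nhds
      filter_upwards [hgRlim ω] with R hR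
      rw [hR]
  have hφlim : Tendsto (fun R => φ (ι ((hgRmem2 R).toLp (gR R)))) atTop
      (nhds (φ (hg.toL1 g))) := (φ.continuous.tendsto _).comp hL1lim
  have hφlim2 : Tendsto (fun R => φ (ι ((hgRmem2 R).toLp (gR R)))) atTop
      (nhds (∫ ω, ⟪gt ω, ψs ω⟫ ∂μ)) := by
    refine hRlim.congr ?_
    intro R
    rw [hkey R]
  have := tendsto_nhds_unique hφlim hφlim2
  rw [this]
  refine integral_congr_ae ?_
  filter_upwards [hgae] with ω hω
  rw [hω]




lemma Lp_coeFn_sum {ι : Type*} (t : Finset ι) (F : ι → Lp H 1 μ) :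
    ⇑(∑ i ∈ t, F i) =ᵐ[μ] fun ω => ∑ i ∈ t, F i ω := by
  classical
  induction t using Finset.induction_on with
  | empty => simpa [Pi.zero_def] using Lp.coeFn_zero (E := H) (p := 1) (μ := μ)
  | @insert a s ha ih =>
    rw [Finset.sum_insert ha]
    filter_upwards [Lp.coeFn_add (F a) (∑ i ∈ s, F i), ih] with ω h1 h2
    rw [h1, Pi.add_apply, h2]
    rw [Finset.sum_insert ha]

lemma mazur_closure
    (yn : ℕ → X → H) (y : X → H)
    (hynint : ∀ n, Integrable (yn n) μ) (hyint : Integrable y μ)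
    (hweak : ∀ ψ : X → H, Measurable ψ → (∃ C : ℝ, ∀ ω, ‖ψ ω‖ ≤ C) →
      Tendsto (fun n => ∫ ω, ⟪yn n ω, ψ ω⟫ ∂μ) atTop (nhds (∫ ω, ⟪y ω, ψ ω⟫ ∂μ)))
    (n' : ℕ → ℕ) (hn' : Tendsto n' atTop atTop) (j : ℕ) :
    hyint.toL1 y ∈ closure (convexHull ℝ
      {g : Lp H 1 μ | ∃ k, j ≤ k ∧ g = (hynint (n' k)).toL1 (yn (n' k))}) := by
  by_contra hnot
  obtain ⟨φ, u, hu1, hu2⟩ := geometric_hahn_banach_closed_point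
    ((convex_convexHull ℝ _).closure) isClosed_closure hnot
  obtain ⟨ψ, hψm, hψb, hψrep⟩ := dual_repr φ
  have htends := hweak ψ hψm hψb
  have h2 : Tendsto (fun k => φ ((hynint (n' k)).toL1 (yn (n' k)))) atTop
      (nhds (φ (hyint.toL1 y))) := by
    rw [hψrep y hyint]
    have hcomp : Tendsto (fun k => ∫ ω, ⟪yn (n' k) ω, ψ ω⟫ ∂μ) atTop
        (nhds (∫ ω, ⟪y ω, ψ ω⟫ ∂μ)) := htends.comp hn'
    refine hcomp.congr ?_
    intro k
    rw [hψrep _ (hynint (n' k))]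
  have h3 : ∀ᶠ k in atTop, φ ((hynint (n' k)).toL1 (yn (n' k))) < u := by
    filter_upwards [eventually_ge_atTop j] with k hk
    exact hu1 _ (subset_closure (subset_convexHull ℝ _ ⟨k, hk, rfl⟩))
  have : φ (hyint.toL1 y) ≤ u := le_of_tendsto h2 (h3.mono fun k hk => hk.le)
  linarith

lemma exists_combo
    (yn : ℕ → X → H) (y : X → H)
    (hynint : ∀ n, Integrable (yn n) μ) (hyint : Integrable y μ)
    (hweak : ∀ ψ : X → H, Measurable ψ → (∃ C : ℝ, ∀ ω, ‖ψ ω‖ ≤ C) →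
      Tendsto (fun n => ∫ ω, ⟪yn n ω, ψ ω⟫ ∂μ) atTop (nhds (∫ ω, ⟪y ω, ψ ω⟫ ∂μ)))
    (n' : ℕ → ℕ) (hn' : Tendsto n' atTop atTop) (j : ℕ) {ε : ℝ} (hε : 0 < ε) :
    ∃ (m : ℕ) (K : Fin m → ℕ) (w : Fin m → ℝ),
      (∀ i, j ≤ K i) ∧ (∀ i, 0 ≤ w i) ∧ (∑ i, w i = 1) ∧
      ∫ ω, ‖(∑ i, w i • yn (n' (K i)) ω) - y ω‖ ∂μ < ε := by
  classical
  have hmem := mazur_closure yn y hynint hyint hweak n' hn' j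
  obtain ⟨z, hz, hdist⟩ := Metric.mem_closure_iff.mp hmem ε hε
  rw [convexHull_eq] at hz
  obtain ⟨ι', t, w, zf, hw0, hw1, hzs, hzsum⟩ := hz
  -- choose indices
  have hsel : ∀ i : {i // i ∈ t}, ∃ k, j ≤ k ∧ zf i = (hynint (n' k)).toL1 (yn (n' k)) :=
    fun i => hzs i i.2
  choose kf hkf1 hkf2 using hsel
  set m := t.card with hm
  set e : Fin m ≃ {i // i ∈ t} := t.equivFin.symm with he
  refine ⟨m, fun q => kf (e q), fun q => w (e q), fun q => hkf1 (e q), fun q => hw0 _ (e q).2, ?_, ?_⟩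
  · rw [Equiv.sum_comp e (fun i => w i)]
    rw [Finset.univ_eq_attach, Finset.sum_attach t w, hw1]
  · -- identify z with the function-level combination
    have hzc : z = ∑ i ∈ t.attach, w i • zf i := by
      rw [← hzsum, Finset.centerMass_eq_of_sum_1 _ _ hw1, ← Finset.sum_attach t (fun i => w i • zf i)]
    have hcoe : ⇑z =ᵐ[μ] fun ω => ∑ i ∈ t.attach, w i • yn (n' (kf i)) ω := by
      rw [hzc]
      have h1 := Lp_coeFn_sum (μ := μ) (H := H) t.attach (fun i => w i • zf i)
      have h2 : ∀ᵐ ω ∂μ, ∀ i ∈ t.attach, (w i • zf i : Lp H 1 μ) ω = w i • yn (n' (kf i)) ω := by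
        rw [eventually_all_finset]
        intro i _
        filter_upwards [Lp.coeFn_smul (w i) (zf i), (hynint (n' (kf i))).coeFn_toL1] with ω hω1 hω2
        rw [← hkf2 i] at hω2
        rw [hω1, Pi.smul_apply, hω2]
      filter_upwards [h1, h2] with ω h1 h2
      rw [h1]
      exact Finset.sum_congr rfl fun i hi => h2 i hi
    have hdist' : ∫ ω, ‖(∑ i ∈ t.attach, w i • yn (n' (kf i)) ω) - y ω‖ ∂μ < ε := by
      have : dist (hyint.toL1 y) z = ∫ ω, ‖(∑ i ∈ t.attach, w i • yn (n' (kf i)) ω) - y ω‖ ∂μ := by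
        rw [dist_eq_norm, ← Lp.norm_neg, neg_sub, L1.norm_eq_integral_norm]
        refine integral_congr_ae ?_
        filter_upwards [Lp.coeFn_sub z (hyint.toL1 y), hcoe, hyint.coeFn_toL1] with ω h1 h2 h3
        rw [h1, Pi.sub_apply, h2, h3]
      rw [← this]
      exact hdist
    have hsum_eq : ∀ ω, (∑ q : Fin m, w (e q) • yn (n' (kf (e q))) ω)
        = ∑ i ∈ t.attach, w i • yn (n' (kf i)) ω := by
      intro ω
      rw [Equiv.sum_comp e (fun i => w i • yn (n' (kf i)) ω)]
      rw [Finset.univ_eq_attach]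
    have hfin : ∫ ω, ‖(∑ i : Fin m, w (e i) • yn (n' (kf (e i))) ω) - y ω‖ ∂μ < ε := by
      refine lt_of_le_of_lt (le_of_eq ?_) hdist'
      refine integral_congr_ae (Eventually.of_forall fun ω => ?_)
      dsimp only
      rw [hsum_eq ω]
    exact hfin

end aux

/-- Let `μ` be a finite complete measure, `H` a Hilbert space, `A ⊆ H × H` a
maximal monotone graph. If `xₙ → x` in measure and `yₙ → y` weakly in `L¹(μ; H)`
(tested against bounded measurable functions), with `(xₙ, yₙ) ∈ A` a.e. for
every `n`, then `(x, y) ∈ A` a.e. -/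
theorem stmt4 {X : Type*} [MeasurableSpace X] (μ : Measure X) [IsFiniteMeasure μ]
    [μ.IsComplete]
    {H : Type*} [NormedAddCommGroup H] [InnerProductSpace ℝ H] [CompleteSpace H]
    [MeasurableSpace H] [BorelSpace H]
    (A : Set (H × H))
    (hmono : ∀ p ∈ A, ∀ q ∈ A, 0 ≤ inner (𝕜 := ℝ) (p.1 - q.1) (p.2 - q.2))
    (hmax : ∀ B : Set (H × H), A ⊆ B →
      (∀ p ∈ B, ∀ q ∈ B, 0 ≤ inner (𝕜 := ℝ) (p.1 - q.1) (p.2 - q.2)) → B = A)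
    (xn : ℕ → X → H) (x : X → H) (yn : ℕ → X → H) (y : X → H)
    (hxnm : ∀ n, Measurable (xn n)) (hxm : Measurable x)
    (hynint : ∀ n, Integrable (yn n) μ) (hyint : Integrable y μ)
    (hconv : TendstoInMeasure μ xn atTop x)
    (hweak : ∀ ψ : X → H, Measurable ψ → (∃ C : ℝ, ∀ ω, ‖ψ ω‖ ≤ C) →
      Tendsto (fun n => ∫ ω, inner (𝕜 := ℝ) (yn n ω) (ψ ω) ∂μ) atTop
        (nhds (∫ ω, inner (𝕜 := ℝ) (y ω) (ψ ω) ∂μ)))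
    (hA : ∀ n, ∀ᵐ ω ∂μ, (xn n ω, yn n ω) ∈ A) :
    ∀ᵐ ω ∂μ, (x ω, y ω) ∈ A := by
  classical
  -- uniform L¹ bound
  obtain ⟨M, hM⟩ := uniform_L1_bound yn y hynint hweak
  have hM0 : 0 ≤ M := le_trans (integral_nonneg (fun ω => norm_nonneg _)) (hM 0)
  -- subsequence along which convergence in measure is summably fast
  have hsub : ∀ k : ℕ, ∃ N : ℕ, ∀ n, N ≤ n →
      μ {ω | (1/2:ℝ)^k ≤ dist (xn n ω) (x ω)} < ENNReal.ofReal ((1/2)^k) := by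
    intro k
    have hpos : (0:ℝ) < (1/2)^k := by positivity
    have ht := hconv (ENNReal.ofReal ((1/2)^k)) (ENNReal.ofReal_pos.mpr hpos)
    have hev := ht.eventually (Iio_mem_nhds (ENNReal.ofReal_pos.mpr hpos))
    have hset : ∀ n, {ω | ENNReal.ofReal ((1/2:ℝ)^k) ≤ edist (xn n ω) (x ω)}
        = {ω | (1/2:ℝ)^k ≤ dist (xn n ω) (x ω)} := by
      intro n; ext ω; simp only [Set.mem_setOf_eq, edist_dist]
      exact ENNReal.ofReal_le_ofReal_iff dist_nonneg
    simp only [hset] at hev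
    exact eventually_atTop.mp hev
  choose N hN using hsub
  set n' : ℕ → ℕ := fun k => N k + k with hn'def
  have hn'k : ∀ k, k ≤ n' k := fun k => Nat.le_add_left k (N k)
  have hn' : Tendsto n' atTop atTop := tendsto_atTop_mono hn'k tendsto_id
  have hμx : ∀ k, μ {ω | (1/2:ℝ)^k ≤ dist (xn (n' k) ω) (x ω)} ≤ ENNReal.ofReal ((1/2)^k) :=
    fun k => (hN k (n' k) (Nat.le_add_right _ _)).le
  -- measurable hulls and Borel-Cantelli
  set G : ℕ → Set X := fun k => toMeasurable μ {ω | (1/2:ℝ)^k ≤ dist (xn (n' k) ω) (x ω)}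
    with hGdef
  have hGsub : ∀ k, {ω | (1/2:ℝ)^k ≤ dist (xn (n' k) ω) (x ω)} ⊆ G k :=
    fun k => subset_toMeasurable _ _
  have hGμ : ∀ k, μ (G k) ≤ ENNReal.ofReal ((1/2)^k) := by
    intro k
    rw [hGdef]
    rw [measure_toMeasurable]
    exact hμx k
  have hGnull : μ (limsup G atTop) = 0 := by
    refine measure_limsup_atTop_eq_zero ?_
    refine ne_top_of_le_ne_top (geom_tsum_ne_top (c := 1/2) (by norm_num) (by norm_num)) ?_
    exact ENNReal.tsum_le_tsum hGμ
  -- convex combinations from Mazur's lemma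
  have hcombo : ∀ j : ℕ, ∃ (m : ℕ) (K : Fin m → ℕ) (w : Fin m → ℝ),
      (∀ i, j ≤ K i) ∧ (∀ i, 0 ≤ w i) ∧ (∑ i, w i = 1) ∧
      ∫ ω, ‖(∑ i, w i • yn (n' (K i)) ω) - y ω‖ ∂μ < (1/4)^j :=
    fun j => exists_combo yn y hynint hyint hweak n' hn' j (by positivity)
  choose m K w hK hw0 hw1 hL1 using hcombo
  set v : ℕ → X → H := fun j ω => ∑ i, w j i • yn (n' (K j i)) ω with hvdef
  set r : ℕ → X → ℝ := fun j ω => (1/2:ℝ)^j * ∑ i, w j i * ‖yn (n' (K j i)) ω‖ with hrdef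
  have hvint : ∀ j, Integrable (v j) μ := by
    intro j
    rw [hvdef]
    apply integrable_finset_sum
    intro i _
    exact (hynint (n' (K j i))).smul (w j i)
  have hrint : ∀ j, Integrable (r j) μ := by
    intro j
    rw [hrdef]
    apply Integrable.const_mul
    apply integrable_finset_sum
    intro i _
    exact ((hynint (n' (K j i))).norm.const_mul (w j i))
  -- L¹ bound on r j
  have hrL1 : ∀ j, ∫ ω, r j ω ∂μ ≤ (1/2:ℝ)^j * M := by
    intro j
    have h1 : ∫ ω, r j ω ∂μ
        = (1/2:ℝ)^j * ∫ ω, (∑ i, w j i * ‖yn (n' (K j i)) ω‖) ∂μ := by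
      rw [hrdef]; exact integral_const_mul _ _
    rw [h1]
    have h2 : ∫ ω, (∑ i, w j i * ‖yn (n' (K j i)) ω‖) ∂μ ≤ M := by
      rw [integral_finset_sum _ (fun i _ => ((hynint (n' (K j i))).norm.const_mul (w j i)))]
      have h3 : ∀ i : Fin (m j), ∫ ω, w j i * ‖yn (n' (K j i)) ω‖ ∂μ ≤ w j i * M := by
        intro i
        rw [integral_const_mul]
        exact mul_le_mul_of_nonneg_left (hM _) (hw0 j i)
      calc (∑ i, ∫ ω, w j i * ‖yn (n' (K j i)) ω‖ ∂μ) ≤ ∑ i, w j i * M :=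
            Finset.sum_le_sum (fun i _ => h3 i)
      _ = M := by rw [← Finset.sum_mul, hw1 j, one_mul]
    have hp : (0:ℝ) ≤ (1/2:ℝ)^j := by positivity
    exact mul_le_mul_of_nonneg_left h2 hp
  -- bad sets
  set S1 : ℕ → Set X := fun j => {ω | (1/2:ℝ)^j ≤ ‖v j ω - y ω‖} with hS1def
  set S2 : ℕ → Set X := fun j => {ω | (3/4:ℝ)^j * (M+1) ≤ r j ω} with hS2def
  have hS1μ : ∀ j, μ (S1 j) ≤ ENNReal.ofReal ((1/2)^j) := by
    intro j
    have hint : Integrable (fun ω => ‖v j ω - y ω‖) μ := ((hvint j).sub hyint).norm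
    have hmk := mul_meas_ge_le_integral_of_nonneg
      (Eventually.of_forall (fun ω => norm_nonneg (v j ω - y ω))) hint ((1/2)^j)
    have hintlt : ∫ ω, ‖v j ω - y ω‖ ∂μ < (1/4:ℝ)^j := hL1 j
    have hpos : (0:ℝ) < (1/2)^j := by positivity
    have htoReal : (μ (S1 j)).toReal ≤ (1/2)^j := by
      rw [hS1def]
      have h4 : ((1/4:ℝ))^j = (1/2)^j * (1/2)^j := by
        rw [← mul_pow]; norm_num
      rw [measureReal_def] at hmk
      nlinarith [hmk, ENNReal.toReal_nonneg (a := μ {ω | (1/2:ℝ)^j ≤ ‖v j ω - y ω‖})]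
    rw [← ENNReal.ofReal_toReal (measure_ne_top μ (S1 j))]
    exact ENNReal.ofReal_le_ofReal htoReal
  have hS2μ : ∀ j, μ (S2 j) ≤ ENNReal.ofReal ((2/3)^j) := by
    intro j
    have hmk := mul_meas_ge_le_integral_of_nonneg
      (Eventually.of_forall (fun ω => ?_)) (hrint j) ((3/4:ℝ)^j * (M+1))
    swap
    · rw [hrdef]
      have : (0:ℝ) ≤ ∑ i, w j i * ‖yn (n' (K j i)) ω‖ :=
        Finset.sum_nonneg (fun i _ => mul_nonneg (hw0 j i) (norm_nonneg _))
      positivity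
    have hpos : (0:ℝ) < (3/4)^j * (M+1) := by positivity
    have htoReal : (μ (S2 j)).toReal ≤ (2/3)^j := by
      rw [hS2def]
      have hle : ((3/4:ℝ)^j * (M+1)) * (μ {ω | (3/4:ℝ)^j * (M+1) ≤ r j ω}).toReal
          ≤ (1/2)^j * M := le_trans hmk (hrL1 j)
      have hratio : ((1/2:ℝ)^j * M) / ((3/4)^j * (M+1)) ≤ (2/3)^j := by
        rw [div_le_iff₀ hpos]
        have hhalf : (1/2:ℝ)^j * M ≤ (1/2)^j * (M+1) := by nlinarith [pow_nonneg (by norm_num : (0:ℝ) ≤ 1/2) j]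
        have hkey : (1/2:ℝ)^j = (2/3)^j * (3/4)^j := by
          rw [← mul_pow]; norm_num
        nlinarith [pow_nonneg (by norm_num : (0:ℝ) ≤ 2/3) j,
          pow_nonneg (by norm_num : (0:ℝ) ≤ 3/4) j]
      calc (μ {ω | (3/4:ℝ)^j * (M+1) ≤ r j ω}).toReal
          ≤ ((1/2:ℝ)^j * M) / ((3/4)^j * (M+1)) := by
            rw [le_div_iff₀ hpos]
            linarith [hle]
      _ ≤ (2/3)^j := hratio
    rw [← ENNReal.ofReal_toReal (measure_ne_top μ (S2 j))]
    exact ENNReal.ofReal_le_ofReal htoReal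
  have hS1null : μ (limsup S1 atTop) = 0 := by
    refine measure_limsup_atTop_eq_zero ?_
    refine ne_top_of_le_ne_top (geom_tsum_ne_top (c := 1/2) (by norm_num) (by norm_num)) ?_
    exact ENNReal.tsum_le_tsum hS1μ
  have hS2null : μ (limsup S2 atTop) = 0 := by
    refine measure_limsup_atTop_eq_zero ?_
    refine ne_top_of_le_ne_top (geom_tsum_ne_top (c := 2/3) (by norm_num) (by norm_num)) ?_
    exact ENNReal.tsum_le_tsum hS2μ
  -- the good event
  have hae1 : ∀ᵐ ω ∂μ, ω ∉ limsup S1 atTop := by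
    rw [ae_iff]; simpa using hS1null
  have hae2 : ∀ᵐ ω ∂μ, ω ∉ limsup S2 atTop := by
    rw [ae_iff]; simpa using hS2null
  have hae3 : ∀ᵐ ω ∂μ, ω ∉ limsup G atTop := by
    rw [ae_iff]; simpa using hGnull
  have haeA : ∀ᵐ ω ∂μ, ∀ k : ℕ, (xn (n' k) ω, yn (n' k) ω) ∈ A :=
    ae_all_iff.mpr (fun k => hA (n' k))
  filter_upwards [hae1, hae2, hae3, haeA] with ω h1 h2 h3 h4
  -- eventual statements at ω
  have hev1 : ∀ᶠ j in atTop, ‖v j ω - y ω‖ < (1/2:ℝ)^j := by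
    have := Filter.not_frequently.mp (fun hf => h1 (mem_limsup_iff_frequently_mem.mpr hf))
    filter_upwards [this] with j hj
    exact not_le.mp (fun hc => hj hc)
  have hev2 : ∀ᶠ j in atTop, r j ω < (3/4:ℝ)^j * (M+1) := by
    have := Filter.not_frequently.mp (fun hf => h2 (mem_limsup_iff_frequently_mem.mpr hf))
    filter_upwards [this] with j hj
    exact not_le.mp (fun hc => hj hc)
  have hev3 : ∀ᶠ k in atTop, ω ∉ G k :=
    Filter.not_frequently.mp (fun hf => h3 (mem_limsup_iff_frequently_mem.mpr hf))
  obtain ⟨J, hJ⟩ := eventually_atTop.mp hev3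
  -- pointwise convergences
  have hgeo : Tendsto (fun j : ℕ => (1/2:ℝ)^j) atTop (nhds 0) :=
    tendsto_pow_atTop_nhds_zero_of_lt_one (by norm_num) (by norm_num)
  have hgeo34 : Tendsto (fun j : ℕ => (3/4:ℝ)^j) atTop (nhds 0) :=
    tendsto_pow_atTop_nhds_zero_of_lt_one (by norm_num) (by norm_num)
  have htendv : Tendsto (fun j => v j ω) atTop (nhds (y ω)) := by
    rw [tendsto_iff_norm_sub_tendsto_zero]
    refine squeeze_zero' (Eventually.of_forall (fun j => norm_nonneg _))
      (hev1.mono (fun j hj => hj.le)) hgeo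
  have htendr : Tendsto (fun j => r j ω) atTop (nhds 0) := by
    have hub : Tendsto (fun j : ℕ => (3/4:ℝ)^j * (M+1)) atTop (nhds 0) := by
      simpa using hgeo34.mul_const (M+1)
    refine squeeze_zero' ?_ (hev2.mono (fun j hj => hj.le)) hub
    refine Eventually.of_forall (fun j => ?_)
    rw [hrdef]
    have : (0:ℝ) ≤ ∑ i, w j i * ‖yn (n' (K j i)) ω‖ :=
      Finset.sum_nonneg (fun i _ => mul_nonneg (hw0 j i) (norm_nonneg _))
    positivity
  -- the key inequality
  have hkey : ∀ a b : H, (a, b) ∈ A → 0 ≤ ⟪x ω - a, y ω - b⟫ := by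
    intro a b hab
    have hSlim : Tendsto (fun j => ⟪x ω - a, v j ω - b⟫) atTop
        (nhds ⟪x ω - a, y ω - b⟫) :=
      Filter.Tendsto.inner tendsto_const_nhds (htendv.sub_const b)
    have hlower : ∀ᶠ j in atTop, -(r j ω + (1/2:ℝ)^j * ‖b‖) ≤ ⟪x ω - a, v j ω - b⟫ := by
      filter_upwards [eventually_ge_atTop J] with j hj
      -- split v j ω - b as a convex combination
      have hsplit : v j ω - b = ∑ i, w j i • (yn (n' (K j i)) ω - b) := by
        rw [hvdef]
        simp only [smul_sub, Finset.sum_sub_distrib]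
        rw [← Finset.sum_smul, hw1 j, one_smul]
      have hexp : ⟪x ω - a, v j ω - b⟫ = ∑ i, w j i * ⟪x ω - a, yn (n' (K j i)) ω - b⟫ := by
        rw [hsplit, inner_sum]
        refine Finset.sum_congr rfl (fun i _ => ?_)
        rw [real_inner_smul_right]
      have hterm : ∀ i : Fin (m j),
          -((1/2:ℝ)^j * (w j i * (‖yn (n' (K j i)) ω‖ + ‖b‖)))
            ≤ w j i * ⟪x ω - a, yn (n' (K j i)) ω - b⟫ := by
        intro i
        set k := K j i with hkdef
        have hJk : J ≤ k := by rw [hkdef]; exact le_trans hj (hK j i)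
        have hk : ω ∉ G k := hJ k hJk
        have hd : ‖x ω - xn (n' k) ω‖ < (1/2:ℝ)^k := by
          by_contra hcon
          push_neg at hcon
          refine hk (hGsub k ?_)
          simp only [Set.mem_setOf_eq, dist_eq_norm]
          rw [norm_sub_rev] at hcon
          exact hcon
        have hdj : ‖x ω - xn (n' k) ω‖ ≤ (1/2:ℝ)^j := by
          refine le_trans hd.le ?_
          exact pow_le_pow_of_le_one (by norm_num) (by norm_num) (by rw [hkdef]; exact hK j i)
        have hmono0 : (0:ℝ) ≤ ⟪xn (n' k) ω - a, yn (n' k) ω - b⟫ :=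
          hmono (xn (n' k) ω, yn (n' k) ω) (h4 k) (a, b) hab
        have hdecomp : ⟪x ω - a, yn (n' k) ω - b⟫
            = ⟪xn (n' k) ω - a, yn (n' k) ω - b⟫ + ⟪x ω - xn (n' k) ω, yn (n' k) ω - b⟫ := by
          rw [← inner_add_left]
          congr 1
          abel
        have herr : |⟪x ω - xn (n' k) ω, yn (n' k) ω - b⟫|
            ≤ (1/2:ℝ)^j * (‖yn (n' k) ω‖ + ‖b‖) := by
          calc |⟪x ω - xn (n' k) ω, yn (n' k) ω - b⟫|
              ≤ ‖x ω - xn (n' k) ω‖ * ‖yn (n' k) ω - b‖ := abs_real_inner_le_norm _ _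
          _ ≤ (1/2:ℝ)^j * (‖yn (n' k) ω‖ + ‖b‖) := by
              refine mul_le_mul hdj (norm_sub_le _ _) (norm_nonneg _) (by positivity)
        have hge : -((1/2:ℝ)^j * (‖yn (n' k) ω‖ + ‖b‖)) ≤ ⟪x ω - a, yn (n' k) ω - b⟫ := by
          rw [hdecomp]
          have := abs_le.mp herr
          linarith [this.1]
        calc -((1/2:ℝ)^j * (w j i * (‖yn (n' k) ω‖ + ‖b‖)))
            = w j i * (-((1/2:ℝ)^j * (‖yn (n' k) ω‖ + ‖b‖))) := by ring
        _ ≤ w j i * ⟪x ω - a, yn (n' k) ω - b⟫ :=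
            mul_le_mul_of_nonneg_left hge (hw0 j i)
      have hsum := Finset.sum_le_sum (fun i (_ : i ∈ Finset.univ) => hterm i)
      have hLHS : (∑ i, -((1/2:ℝ)^j * (w j i * (‖yn (n' (K j i)) ω‖ + ‖b‖))))
          = -(r j ω + (1/2:ℝ)^j * ‖b‖) := by
        rw [hrdef]
        have hx1 : (∑ i, -((1/2:ℝ)^j * (w j i * (‖yn (n' (K j i)) ω‖ + ‖b‖))))
            = -((1/2:ℝ)^j * ∑ i, (w j i * ‖yn (n' (K j i)) ω‖ + w j i * ‖b‖)) := by
          rw [Finset.sum_neg_distrib, ← Finset.mul_sum]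
          congr 1
          congr 1
          refine Finset.sum_congr rfl (fun i _ => ?_)
          ring
        rw [hx1, Finset.sum_add_distrib, ← Finset.sum_mul, hw1 j, one_mul]
        ring
      rw [hexp]
      rw [hLHS] at hsum
      exact hsum
    have hzero : Tendsto (fun j => -(r j ω + (1/2:ℝ)^j * ‖b‖)) atTop (nhds 0) := by
      have := (htendr.add (hgeo.mul_const ‖b‖)).neg
      simpa using this
    exact le_of_tendsto_of_tendsto hzero hSlim hlower
  -- conclude by maximality
  have hBmono : ∀ p ∈ insert (x ω, y ω) A, ∀ q ∈ insert (x ω, y ω) A,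
      0 ≤ inner (𝕜 := ℝ) (p.1 - q.1) (p.2 - q.2) := by
    intro p hp q hq
    rcases hp with hp | hp
    · rcases hq with hq | hq
      · subst hp; subst hq; simp
      · subst hp
        exact hkey q.1 q.2 (by simpa using hq)
    · rcases hq with hq | hq
      · subst hq
        have h := hkey p.1 p.2 (by simpa using hp)
        have heq : ⟪p.1 - x ω, p.2 - y ω⟫ = ⟪x ω - p.1, y ω - p.2⟫ := by
          rw [← inner_neg_neg, neg_sub, neg_sub]
        simp only [heq]
        exact h
      · exact hmono p hp q hq
  have hBA := hmax _ (Set.subset_insert _ _) hBmono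
  rw [← hBA]
  exact Set.mem_insert _ _
end

section
/- Let (X, 𝒜, μ) be a finite complete measure space and γ a maximal monotone graph in ℝ × ℝ with full domain and (0,0) ∈ γ. If sequences (xₙ), (yₙ) in L⁰(μ) satisfy (xₙ, yₙ) ∈ γ μ-a.e. for every n, and the sequence (xₙ yₙ) is bounded in L¹(μ), then (yₙ) is uniformly integrable, hence relatively weakly sequentially compact in L¹(μ). -/
open MeasureTheory Filter
open scoped ENNReal NNReal RealInnerProductSpace Topology

lemma gamma_bound (γ : Set (ℝ × ℝ))
    (hmono : ∀ p ∈ γ, ∀ q ∈ γ, 0 ≤ (p.1 - q.1) * (p.2 - q.2))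
    (hdom : ∀ a : ℝ, ∃ b : ℝ, (a, b) ∈ γ) (h0 : ((0 : ℝ), (0 : ℝ)) ∈ γ)
    (M : ℝ) (hM : 0 < M) :
    ∃ K : ℝ, 0 ≤ K ∧ ∀ p ∈ γ, 0 ≤ p.1 * p.2 ∧ |p.2| ≤ K + p.1 * p.2 / M := by
  obtain ⟨cp, hcp⟩ := hdom (M + 1)
  obtain ⟨cm, hcm⟩ := hdom (-(M + 1))
  refine ⟨max |cp| |cm|, le_trans (abs_nonneg _) (le_max_left _ _), ?_⟩
  rintro ⟨a, b⟩ hab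
  have hpos : 0 ≤ a * b := by simpa using hmono (a, b) hab (0, 0) h0
  refine ⟨hpos, ?_⟩
  rcases le_or_gt |a| M with h | h
  · -- |a| ≤ M : b between cm and cp
    have h1 : 0 ≤ (a - (M + 1)) * (b - cp) := hmono (a, b) hab _ hcp
    have h2 : 0 ≤ (a - -(M + 1)) * (b - cm) := hmono (a, b) hab _ hcm
    have ha1 : a - (M + 1) < 0 := by
      have := abs_le.mp h; linarith [this.2]
    have ha2 : 0 < a - -(M + 1) := by
      have := abs_le.mp h; linarith [this.1]
    have hb1 : b ≤ cp := by nlinarith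
    have hb2 : cm ≤ b := by nlinarith
    have : |b| ≤ max |cp| |cm| := by
      rw [abs_le]; constructor
      · calc -(max |cp| |cm|) ≤ -|cm| := by simp [neg_le_neg_iff]
          _ ≤ cm := neg_abs_le _
          _ ≤ b := hb2
      · exact hb1.trans ((le_abs_self _).trans (le_max_left _ _))
    have : 0 ≤ a * b / M := div_nonneg hpos hM.le
    linarith
  · -- |a| > M : |b| ≤ a b / M
    have : M * |b| ≤ a * b := by
      calc M * |b| ≤ |a| * |b| := by nlinarith [abs_nonneg b]
        _ = |a * b| := (abs_mul a b).symm
        _ = a * b := abs_of_nonneg hpos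
    have : |b| ≤ a * b / M := (le_div_iff₀' hM).mpr this
    have : 0 ≤ max |cp| |cm| := le_trans (abs_nonneg _) (le_max_left _ _)
    linarith

lemma lint_bound {X : Type*} [MeasurableSpace X] (μ : Measure X) (x y : X → ℝ)
    (hx : Measurable x) (hy : Measurable y)
    (K M C : ℝ) (hM : 0 < M) (hK : 0 ≤ K)
    (hae : ∀ᵐ ω ∂μ, 0 ≤ x ω * y ω ∧ |y ω| ≤ K + x ω * y ω / M)
    (hC : ∫⁻ ω, ‖x ω * y ω‖₊ ∂μ ≤ ENNReal.ofReal C)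
    (s : Set X) (hs : MeasurableSet s) :
    ∫⁻ ω in s, ‖y ω‖₊ ∂μ ≤ ENNReal.ofReal K * μ s + ENNReal.ofReal C / ENNReal.ofReal M := by
  have step : ∫⁻ ω in s, ‖y ω‖₊ ∂μ ≤
      ∫⁻ ω in s, (ENNReal.ofReal K + ‖x ω * y ω‖₊ / ENNReal.ofReal M) ∂μ := by
    refine lintegral_mono_ae ((ae_restrict_of_ae hae).mono ?_)
    rintro ω ⟨h1, h2⟩
    have e1 : (‖y ω‖₊ : ℝ≥0∞) = ENNReal.ofReal |y ω| := by
      exact Real.enorm_eq_ofReal_abs _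
    have e2 : (‖x ω * y ω‖₊ : ℝ≥0∞) = ENNReal.ofReal (x ω * y ω) := by
      exact (Real.enorm_eq_ofReal_abs _).trans (by rw [abs_of_nonneg h1])
    rw [e1, e2, ← ENNReal.ofReal_div_of_pos hM]
    exact le_trans (ENNReal.ofReal_le_ofReal h2) (ENNReal.ofReal_add_le)
  have meas : Measurable fun ω => (‖x ω * y ω‖₊ : ℝ≥0∞) / ENNReal.ofReal M :=
    ((hx.mul hy).enorm).div measurable_const
  calc ∫⁻ ω in s, ‖y ω‖₊ ∂μ
      ≤ ∫⁻ ω in s, (ENNReal.ofReal K + ‖x ω * y ω‖₊ / ENNReal.ofReal M) ∂μ := step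
    _ = ENNReal.ofReal K * μ s + ∫⁻ ω in s, (‖x ω * y ω‖₊ / ENNReal.ofReal M) ∂μ := by
        rw [lintegral_add_left measurable_const, setLIntegral_const]
    _ ≤ ENNReal.ofReal K * μ s + ENNReal.ofReal C / ENNReal.ofReal M := by
        gcongr
        calc ∫⁻ ω in s, (‖x ω * y ω‖₊ / ENNReal.ofReal M) ∂μ
            = (∫⁻ ω in s, ‖x ω * y ω‖₊ ∂μ) / ENNReal.ofReal M := by
              simp only [div_eq_mul_inv]; exact lintegral_mul_const _ (hx.mul hy).enorm
          _ ≤ (∫⁻ ω, ‖x ω * y ω‖₊ ∂μ) / ENNReal.ofReal M := by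
              gcongr; exact Measure.restrict_le_self
          _ ≤ ENNReal.ofReal C / ENNReal.ofReal M := by gcongr

lemma weak_cpt {E : Type*} [NormedAddCommGroup E] [InnerProductSpace ℝ E] [CompleteSpace E]
    (u : ℕ → ℕ → E) (M : ℕ → ℝ) (hM : ∀ k n, ‖u k n‖ ≤ M k) :
    ∃ s : ℕ → ℕ, StrictMono s ∧ ∀ k, ∃ z : E,
      ∀ g : E, Tendsto (fun n => ⟪u k (s n), g⟫) atTop (𝓝 ⟪z, g⟫) := by
  set M' : ℕ → ℝ := fun k => max (M k) 0 with hM'def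
  have hM'0 : ∀ k, 0 ≤ M' k := fun k => le_max_right _ _
  have hM' : ∀ k n, ‖u k n‖ ≤ M' k := fun k n => (hM k n).trans (le_max_left _ _)
  -- Step 1 : Bolzano-Weierstrass diagonal extraction
  set v : ℕ → (ℕ × ℕ × ℕ) → ℝ :=
    fun n p => ⟪u p.1 n, u p.2.1 p.2.2⟫ / (1 + M' p.1 * M' p.2.1) with hvdef
  have hv : ∀ n, v n ∈ Set.pi Set.univ (fun _ : ℕ × ℕ × ℕ => Set.Icc (-1 : ℝ) 1) := by
    intro n p _
    have hpos : (0:ℝ) < 1 + M' p.1 * M' p.2.1 := by positivity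
    have habs : |v n p| ≤ 1 := by
      rw [hvdef, abs_div, abs_of_pos hpos, div_le_one hpos]
      calc |⟪u p.1 n, u p.2.1 p.2.2⟫| ≤ ‖u p.1 n‖ * ‖u p.2.1 p.2.2‖ := abs_real_inner_le_norm _ _
        _ ≤ M' p.1 * M' p.2.1 := by
            apply mul_le_mul (hM' _ _) (hM' _ _) (norm_nonneg _) (hM'0 _)
        _ ≤ 1 + M' p.1 * M' p.2.1 := by linarith
    exact abs_le.mp habs
  have hcomp : IsCompact (Set.pi Set.univ fun _ : ℕ × ℕ × ℕ => Set.Icc (-1 : ℝ) 1) :=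
    isCompact_univ_pi fun _ => isCompact_Icc
  obtain ⟨L0, -, s, hsmono, hconv⟩ := hcomp.tendsto_subseq hv
  have hj : ∀ p : ℕ × ℕ × ℕ, Tendsto (fun n => v (s n) p) atTop (𝓝 (L0 p)) := by
    intro p
    exact (tendsto_pi_nhds.mp hconv) p
  have hinner : ∀ k k' j, ∃ l : ℝ,
      Tendsto (fun n => ⟪u k (s n), u k' j⟫) atTop (𝓝 l) := by
    intro k k' j
    refine ⟨L0 (k, k', j) * (1 + M' k * M' k'), ?_⟩
    have hpos : (0:ℝ) < 1 + M' k * M' k' := by positivity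
    have := (hj (k, k', j)).mul_const (1 + M' k * M' k')
    convert this using 2 with n
    rw [hvdef]
    field_simp
  refine ⟨s, hsmono, fun k => ?_⟩
  -- Step 2 : limits exist for every g
  set K : Submodule ℝ E :=
    (Submodule.span ℝ (⋃ k', Set.range (u k'))).topologicalClosure with hKdef
  haveI : CompleteSpace K := (Submodule.span ℝ (⋃ k', Set.range (u k'))).isClosed_topologicalClosure.completeSpace_coe
  set T : Set E := {g | ∃ l : ℝ, Tendsto (fun n => ⟪u k (s n), g⟫) atTop (𝓝 l)} with hTdef
  have hTspan : (Submodule.span ℝ (⋃ k', Set.range (u k')) : Set E) ⊆ T := by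
    intro g hg
    induction hg using Submodule.span_induction with
    | mem g hg =>
        obtain ⟨_, ⟨k', rfl⟩, j, rfl⟩ := hg
        exact hinner k k' j
    | zero => exact ⟨0, by simpa using tendsto_const_nhds⟩
    | add a b _ _ ha hb =>
        obtain ⟨la, hla⟩ := ha; obtain ⟨lb, hlb⟩ := hb
        exact ⟨la + lb, by simpa [inner_add_right] using hla.add hlb⟩
    | smul r a _ ha =>
        obtain ⟨la, hla⟩ := ha
        exact ⟨r * la, by simpa [real_inner_smul_right] using hla.const_mul r⟩
  have hTclosed : IsClosed T := by
    refine isClosed_of_closure_subset ?_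
    intro g hg
    have hC : CauchySeq (fun n => ⟪u k (s n), g⟫) := by
      rw [Metric.cauchySeq_iff]
      intro ε hε
      obtain ⟨g', hg'T, hgg'⟩ := Metric.mem_closure_iff.mp hg (ε / (3 * (M' k + 1)))
        (by positivity)
      obtain ⟨l', hl'⟩ := hg'T
      obtain ⟨N, hN⟩ := Metric.cauchySeq_iff.mp hl'.cauchySeq (ε / 3) (by positivity)
      refine ⟨N, fun m hm n hn => ?_⟩
      have key : ∀ j, dist ⟪u k (s j), g⟫ ⟪u k (s j), g'⟫ ≤ ε / 3 := by
        intro j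
        rw [Real.dist_eq, ← inner_sub_right]
        calc |⟪u k (s j), g - g'⟫| ≤ ‖u k (s j)‖ * ‖g - g'‖ := abs_real_inner_le_norm _ _
          _ ≤ M' k * (ε / (3 * (M' k + 1))) := by
              refine mul_le_mul (hM' _ _) ?_ (norm_nonneg _) (hM'0 _)
              rw [← dist_eq_norm]; exact hgg'.le
          _ ≤ ε / 3 := by
              rw [← mul_div_assoc, div_le_div_iff₀ (by positivity) (by norm_num)]
              have := hM'0 k
              nlinarith
      calc dist ⟪u k (s m), g⟫ ⟪u k (s n), g⟫
          ≤ dist ⟪u k (s m), g⟫ ⟪u k (s m), g'⟫ + dist ⟪u k (s m), g'⟫ ⟪u k (s n), g'⟫ +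
            dist ⟪u k (s n), g'⟫ ⟪u k (s n), g⟫ := dist_triangle4 _ _ _ _
        _ < ε / 3 + ε / 3 + ε / 3 := by
            have := key m
            have := key n
            have := hN m hm n hn
            rw [dist_comm ⟪u k (s n), g'⟫ ⟪u k (s n), g⟫] at *
            linarith
        _ = ε := by ring
    exact cauchySeq_tendsto_of_complete hC
  have hTclosure : closure (Submodule.span ℝ (⋃ k', Set.range (u k')) : Set E) ⊆ T :=
    closure_minimal hTspan hTclosed
  have hKT : (K : Set E) ⊆ T := by
    rw [hKdef, Submodule.topologicalClosure_coe]
    exact hTclosure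
  have huK : ∀ k' n, u k' n ∈ K :=
    fun k' n => Submodule.le_topologicalClosure _
      (Submodule.subset_span (Set.mem_iUnion.mpr ⟨k', Set.mem_range_self n⟩))
  have hall : ∀ g : E, ∃ l : ℝ, Tendsto (fun n => ⟪u k (s n), g⟫) atTop (𝓝 l) := by
    intro g
    have hPg : ((K.orthogonalProjection g : K) : E) ∈ T := hKT (K.orthogonalProjection g).2
    obtain ⟨l, hl⟩ := hPg
    refine ⟨l, ?_⟩
    have heq : ∀ n, ⟪u k (s n), g⟫ = ⟪u k (s n), ((K.orthogonalProjection g : K) : E)⟫ := by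
      intro n
      have horth : g - ((K.orthogonalProjection g : K) : E) ∈ Kᗮ :=
        Submodule.sub_starProjection_mem_orthogonal (K := K) g
      have h0 := (Submodule.mem_orthogonal K _).mp horth (u k (s n)) (huK k (s n))
      have := inner_sub_right (𝕜 := ℝ) (u k (s n)) g ((K.orthogonalProjection g : K) : E)
      rw [h0] at this
      linarith [this]
    simpa only [heq] using hl
  -- Step 3 : Riesz representation
  choose L hL using hall
  have hadd : ∀ a b, L (a + b) = L a + L b := by
    intro a b
    refine tendsto_nhds_unique (hL (a + b)) ?_
    simpa [inner_add_right] using (hL a).add (hL b)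
  have hsmul : ∀ (r : ℝ) a, L (r • a) = r * L a := by
    intro r a
    refine tendsto_nhds_unique (hL (r • a)) ?_
    simpa [real_inner_smul_right] using (hL a).const_mul r
  have hbound : ∀ g, ‖L g‖ ≤ M' k * ‖g‖ := by
    intro g
    have h1 : Tendsto (fun n => |⟪u k (s n), g⟫|) atTop (𝓝 |L g|) := (hL g).abs
    refine le_of_tendsto h1 (Eventually.of_forall fun n => ?_)
    calc |⟪u k (s n), g⟫| ≤ ‖u k (s n)‖ * ‖g‖ := abs_real_inner_le_norm _ _
      _ ≤ M' k * ‖g‖ := by gcongr; exact hM' _ _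
  set F : E →ₗ[ℝ] ℝ := { toFun := L, map_add' := hadd, map_smul' := hsmul } with hFdef
  set F' : E →L[ℝ] ℝ := F.mkContinuous (M' k) hbound with hF'def
  refine ⟨(InnerProductSpace.toDual ℝ E).symm F', fun g => ?_⟩
  have : ⟪(InnerProductSpace.toDual ℝ E).symm F', g⟫ = F' g :=
    InnerProductSpace.toDual_symm_apply
  rw [this]
  exact hL g

noncomputable def trunc (k : ℕ) (a : ℝ) : ℝ := max (-(k : ℝ)) (min a k)

lemma trunc_abs_le (k : ℕ) (a : ℝ) : |trunc k a| ≤ k := by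
  unfold trunc
  rw [abs_le]
  constructor
  · exact le_max_left _ _
  · exact max_le (by simp) (le_trans (min_le_right _ _) le_rfl)

lemma trunc_eq_of_abs_le {k : ℕ} {a : ℝ} (h : |a| ≤ k) : trunc k a = a := by
  unfold trunc
  rw [abs_le] at h
  rw [min_eq_left h.2, max_eq_right h.1]

lemma abs_sub_trunc_le (k : ℕ) (a : ℝ) : |a - trunc k a| ≤ |a| := by
  unfold trunc
  rcases le_total a (-(k:ℝ)) with h | h
  · rw [max_eq_left (le_trans (min_le_left _ _) h)]
    have hk : (0:ℝ) ≤ k := Nat.cast_nonneg k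
    rw [abs_of_nonpos (by linarith), abs_of_nonpos (by linarith)]
    linarith
  · rcases le_total (k:ℝ) a with h2 | h2
    · have hk : (0:ℝ) ≤ k := Nat.cast_nonneg k
      rw [min_eq_right h2, max_eq_right (by linarith)]
      rw [abs_of_nonneg (by linarith), abs_of_nonneg (by linarith)]
      linarith
    · rw [min_eq_left h2, max_eq_right h]
      simp [abs_nonneg]

lemma measurable_trunc (k : ℕ) : Measurable (trunc k) :=
  measurable_const.max ((measurable_id.min measurable_const))

lemma trunc_tail {X : Type*} [MeasurableSpace X] (μ : Measure X) [IsFiniteMeasure μ]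
    (f : ℕ → X → ℝ) (hfm : ∀ n, Measurable (f n)) (C' : ℝ)
    (hfbd : ∀ n, ∫⁻ ω, ‖f n ω‖₊ ∂μ ≤ ENNReal.ofReal C')
    (hUI : UnifIntegrable f 1 μ) :
    ∀ ε : ℝ, 0 < ε → ∃ k₀ : ℕ, ∀ k ≥ k₀, ∀ n,
      ∫⁻ ω, ‖f n ω - trunc k (f n ω)‖₊ ∂μ ≤ ENNReal.ofReal ε := by
  intro ε hε
  obtain ⟨δ, hδ, hUIε⟩ := hUI hε
  obtain ⟨k₀, hk₀⟩ := exists_nat_ge (max ((C' + 1) / δ) 1)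
  refine ⟨k₀, fun k hk n => ?_⟩
  have hkpos : (0:ℝ) < k := by
    have : (1:ℝ) ≤ k₀ := le_trans (le_max_right _ _) hk₀
    have : (k₀:ℝ) ≤ k := Nat.cast_le.mpr hk
    linarith
  set S : Set X := {ω | (k:ℝ) ≤ |f n ω|} with hSdef
  have hSm : MeasurableSet S := measurableSet_le measurable_const (hfm n).abs
  -- Markov inequality
  have hmarkov : μ S ≤ ENNReal.ofReal δ := by
    have h1 : μ S ≤ (∫⁻ ω, ‖f n ω‖₊ ∂μ) / ENNReal.ofReal k := by
      have := mul_meas_ge_le_lintegral₀ (μ := μ)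
        (f := fun ω => (‖f n ω‖₊ : ℝ≥0∞)) (hfm n).enorm.aemeasurable (ENNReal.ofReal k)
      rw [ENNReal.le_div_iff_mul_le (Or.inl (ne_of_gt (ENNReal.ofReal_pos.mpr hkpos)))
        (Or.inl ENNReal.ofReal_ne_top), mul_comm]
      refine le_trans ?_ this
      apply mul_le_mul_right
      apply measure_mono
      intro ω hω
      simp only [Set.mem_setOf_eq] at hω ⊢
      rw [← enorm_eq_nnnorm, Real.enorm_eq_ofReal_abs]
      exact ENNReal.ofReal_le_ofReal hω
    refine h1.trans ?_
    rw [ENNReal.div_le_iff_le_mul (Or.inl (ne_of_gt (ENNReal.ofReal_pos.mpr hkpos)))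
      (Or.inl ENNReal.ofReal_ne_top)]
    refine (hfbd n).trans ?_
    rw [← ENNReal.ofReal_mul hδ.le]
    apply ENNReal.ofReal_le_ofReal
    have h2 : (C' + 1) / δ ≤ (k:ℝ) :=
      le_trans (le_trans (le_max_left _ _) hk₀) (Nat.cast_le.mpr hk)
    rw [div_le_iff₀ hδ] at h2
    nlinarith
  -- uniform integrability on S
  have hUIS := hUIε n S hSm hmarkov
  rw [eLpNorm_indicator_eq_eLpNorm_restrict hSm, eLpNorm_one_eq_lintegral_enorm] at hUIS
  refine le_trans ?_ hUIS
  -- pointwise bound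
  calc ∫⁻ ω, ‖f n ω - trunc k (f n ω)‖₊ ∂μ
      ≤ ∫⁻ ω, S.indicator (fun ω => (‖f n ω‖₊ : ℝ≥0∞)) ω ∂μ := by
        apply lintegral_mono
        intro ω
        by_cases hω : ω ∈ S
        · rw [Set.indicator_of_mem hω]
          simp only [← enorm_eq_nnnorm, Real.enorm_eq_ofReal_abs]
          exact ENNReal.ofReal_le_ofReal (abs_sub_trunc_le k _)
        · rw [Set.indicator_of_notMem hω]
          have h3 : |f n ω| ≤ k := by
            simp only [hSdef, Set.mem_setOf_eq, not_le] at hω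
            exact hω.le
          show (‖f n ω - trunc k (f n ω)‖₊ : ℝ≥0∞) ≤ 0
          rw [trunc_eq_of_abs_le h3]
          simp
    _ = ∫⁻ ω in S, ‖f n ω‖₊ ∂μ := lintegral_indicator hSm _

lemma abs_integral_sign {X : Type*} [MeasurableSpace X] (μ : Measure X)
    (v : X → ℝ) (hvm : Measurable v) (c : ℝ)
    (h : ∀ g : X → ℝ, Measurable g → (∀ ω, |g ω| ≤ 1) → |∫ ω, v ω * g ω ∂μ| ≤ c) :
    ∫ ω, |v ω| ∂μ ≤ c := by
  set g : X → ℝ := fun ω => if 0 ≤ v ω then (1:ℝ) else -1 with hgdef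
  have hgm : Measurable g :=
    Measurable.ite (measurableSet_le measurable_const hvm) measurable_const measurable_const
  have hgb : ∀ ω, |g ω| ≤ 1 := by
    intro ω; rw [hgdef]; dsimp only; split_ifs <;> simp
  have heq : ∀ ω, v ω * g ω = |v ω| := by
    intro ω; rw [hgdef]; dsimp only; split_ifs with hω
    · rw [mul_one, abs_of_nonneg hω]
    · push_neg at hω; rw [abs_of_neg hω]; ring
  have := h g hgm hgb
  rw [integral_congr_ae (Eventually.of_forall heq)] at this
  refine le_trans ?_ this
  exact le_abs_self _

lemma inner_coe_toLp {X : Type*} [MeasurableSpace X] {μ : Measure X}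
    (F : Lp ℝ 2 μ) (b : X → ℝ) (hb : MemLp b 2 μ) :
    ⟪F, hb.toLp b⟫ = ∫ ω, (F : X → ℝ) ω * b ω ∂μ := by
  rw [MeasureTheory.L2.inner_def]
  apply integral_congr_ae
  filter_upwards [hb.coeFn_toLp] with ω h2
  rw [h2]
  simp [RCLike.inner_apply, conj_trivial]; ring

lemma int_mul_bdd {X : Type*} [MeasurableSpace X] {μ : Measure X} {v g : X → ℝ}
    (hv : Integrable v μ) (hgm : AEStronglyMeasurable g μ) {B : ℝ} (hg : ∀ ω, |g ω| ≤ B) :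
    Integrable (fun ω => v ω * g ω) μ := by
  have := hv.bdd_mul hgm (c := B) (Eventually.of_forall fun x => by simpa [Real.norm_eq_abs] using hg x)
  simpa [mul_comm] using this

lemma abs_int_mul_le {X : Type*} [MeasurableSpace X] {μ : Measure X} (v g : X → ℝ)
    (hv : Integrable v μ) (hgm : AEStronglyMeasurable g μ) (B : ℝ) (hg : ∀ ω, |g ω| ≤ B) :
    |∫ ω, v ω * g ω ∂μ| ≤ B * ∫ ω, |v ω| ∂μ := by
  have hint : Integrable (fun ω => v ω * g ω) μ := int_mul_bdd hv hgm hg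
  calc |∫ ω, v ω * g ω ∂μ| ≤ ∫ ω, |v ω * g ω| ∂μ := by
        simpa only [Real.norm_eq_abs] using norm_integral_le_integral_norm (fun ω => v ω * g ω) (μ := μ)
    _ ≤ ∫ ω, B * |v ω| ∂μ := by
        refine integral_mono hint.abs (hv.abs.const_mul B) fun ω => ?_
        rw [abs_mul]
        nlinarith [abs_nonneg (v ω), abs_nonneg (g ω), hg ω]
    _ = B * ∫ ω, |v ω| ∂μ := integral_const_mul B _

lemma int_abs_le_of_lintegral {X : Type*} [MeasurableSpace X] {μ : Measure X} (v : X → ℝ)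
    (hv : AEStronglyMeasurable v μ) (ε : ℝ) (hε : 0 ≤ ε)
    (h : ∫⁻ ω, ‖v ω‖₊ ∂μ ≤ ENNReal.ofReal ε) : ∫ ω, |v ω| ∂μ ≤ ε := by
  have : ∫ ω, |v ω| ∂μ = (∫⁻ ω, ‖v ω‖₊ ∂μ).toReal := by
    simp only [← enorm_eq_nnnorm]; rw [← integral_norm_eq_lintegral_enorm hv]
    simp [Real.norm_eq_abs]
  rw [this]
  exact le_trans (ENNReal.toReal_mono ENNReal.ofReal_ne_top h)
    (ENNReal.toReal_ofReal hε).le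

lemma L1_norm_sub_eq {X : Type*} [MeasurableSpace X] {μ : Measure X} (w1 w2 : Lp ℝ 1 μ) :
    ‖w1 - w2‖ = ∫ ω, |(w1 : X → ℝ) ω - (w2 : X → ℝ) ω| ∂μ := by
  have hint : Integrable (fun ω => (w1 : X → ℝ) ω - (w2 : X → ℝ) ω) μ :=
    (L1.integrable_coeFn w1).sub (L1.integrable_coeFn w2)
  have hsub : ⇑(w1 - w2) =ᵐ[μ] fun ω => (w1 : X → ℝ) ω - (w2 : X → ℝ) ω := by
    filter_upwards [Lp.coeFn_sub w1 w2] with ω hω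
    simpa using hω
  rw [Lp.norm_def, eLpNorm_congr_ae hsub, eLpNorm_one_eq_lintegral_enorm,
    ← ofReal_integral_norm_eq_lintegral_enorm hint,
    ENNReal.toReal_ofReal (integral_nonneg fun ω => norm_nonneg _)]
  simp [Real.norm_eq_abs]

lemma part3 {X : Type*} [MeasurableSpace X] (μ : Measure X) [IsFiniteMeasure μ]
    (f : ℕ → X → ℝ) (hfm : ∀ n, Measurable (f n)) (C' : ℝ)
    (hfbd : ∀ n, ∫⁻ ω, ‖f n ω‖₊ ∂μ ≤ ENNReal.ofReal C')
    (hUI : UnifIntegrable f 1 μ) :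
    ∃ ψ : ℕ → ℕ, StrictMono ψ ∧ ∃ z : X → ℝ, Integrable z μ ∧
      ∀ g : X → ℝ, Measurable g → (∃ B : ℝ, ∀ ω, ‖g ω‖ ≤ B) →
        Tendsto (fun n => ∫ ω, f (ψ n) ω * g ω ∂μ) atTop (𝓝 (∫ ω, z ω * g ω ∂μ)) := by
  have hInt : ∀ n, Integrable (f n) μ := fun n =>
    ⟨(hfm n).aestronglyMeasurable, lt_of_le_of_lt (hfbd n) ENNReal.ofReal_lt_top⟩
  set tf : ℕ → ℕ → X → ℝ := fun k n ω => trunc k (f n ω) with htfdef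
  have htfm : ∀ k n, Measurable (tf k n) := fun k n => (measurable_trunc k).comp (hfm n)
  have htfb : ∀ k n ω, ‖tf k n ω‖ ≤ (k : ℝ) := fun k n ω => by
    rw [Real.norm_eq_abs]; exact trunc_abs_le k _
  have hmem2 : ∀ k n, MemLp (tf k n) 2 μ := fun k n =>
    MemLp.of_bound (htfm k n).aestronglyMeasurable _ (Eventually.of_forall (htfb k n))
  have htf_int : ∀ k n, Integrable (tf k n) μ := fun k n => (hmem2 k n).integrable one_le_two
  set u : ℕ → ℕ → Lp ℝ 2 μ := fun k n => (hmem2 k n).toLp (tf k n) with hudef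
  have hucoe : ∀ k n, (u k n : X → ℝ) =ᵐ[μ] tf k n := fun k n => (hmem2 k n).coeFn_toLp
  set M : ℕ → ℝ :=
    fun k => ((μ Set.univ) ^ (2 : ℝ≥0∞).toReal⁻¹ * ENNReal.ofReal (k : ℝ)).toReal with hMdef
  have hM : ∀ k n, ‖u k n‖ ≤ M k := by
    intro k n
    rw [hudef]; dsimp only
    rw [Lp.norm_toLp]
    refine ENNReal.toReal_mono ?_ (eLpNorm_le_of_ae_bound (Eventually.of_forall (htfb k n)))
    exact ENNReal.mul_ne_top
      (ENNReal.rpow_ne_top_of_nonneg (by positivity) (measure_ne_top μ _))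
      ENNReal.ofReal_ne_top
  obtain ⟨s, hsmono, hweak⟩ := weak_cpt u M hM
  choose zk hzk using hweak
  have hzkm : ∀ k, Measurable (zk k : X → ℝ) := fun k =>
    (Lp.stronglyMeasurable (zk k)).measurable
  have hzkint : ∀ k, Integrable (zk k : X → ℝ) μ := fun k =>
    (Lp.memLp (zk k)).integrable one_le_two
  have htail := trunc_tail μ f hfm C' hfbd hUI
  -- tail integrals in Bochner form
  have htailI : ∀ ε : ℝ, 0 < ε → ∃ k₀ : ℕ, ∀ k ≥ k₀, ∀ n,
      ∫ ω, |f n ω - tf k n ω| ∂μ ≤ ε := by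
    intro ε hε
    obtain ⟨k₀, hk₀⟩ := htail ε hε
    exact ⟨k₀, fun k hk n => int_abs_le_of_lintegral _
      (((hfm n).sub (htfm k n)).aestronglyMeasurable) ε hε.le (hk₀ k hk n)⟩
  -- inner products as integrals
  have hinner_u : ∀ k n (g : X → ℝ) (hg : MemLp g 2 μ),
      ⟪u k n, hg.toLp g⟫ = ∫ ω, tf k n ω * g ω ∂μ := by
    intro k n g hg
    rw [inner_coe_toLp]
    exact integral_congr_ae ((hucoe k n).mono fun ω hω => by simp only [hω])
  -- duality estimate for differences of weak limits
  have hdual : ∀ ε : ℝ, 0 < ε → ∃ k₀ : ℕ, ∀ k ≥ k₀, ∀ l ≥ k₀,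
      ∫ ω, |(zk k : X → ℝ) ω - (zk l : X → ℝ) ω| ∂μ ≤ 2 * ε := by
    intro ε hε
    obtain ⟨k₀, hk₀⟩ := htailI ε hε
    refine ⟨k₀, fun k hk l hl => ?_⟩
    apply abs_integral_sign μ _ ((hzkm k).sub (hzkm l))
    intro g hgm hgb
    have hgmem : MemLp g 2 μ := MemLp.of_bound hgm.aestronglyMeasurable 1
      (Eventually.of_forall fun ω => by rw [Real.norm_eq_abs]; exact hgb ω)
    have hconv : Tendsto (fun n => ⟪u k (s n), hgmem.toLp g⟫ - ⟪u l (s n), hgmem.toLp g⟫)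
        atTop (𝓝 (⟪zk k, hgmem.toLp g⟫ - ⟪zk l, hgmem.toLp g⟫)) :=
      (hzk k (hgmem.toLp g)).sub (hzk l (hgmem.toLp g))
    have hbound : ∀ n, |⟪u k (s n), hgmem.toLp g⟫ - ⟪u l (s n), hgmem.toLp g⟫| ≤ 2 * ε := by
      intro n
      rw [hinner_u k (s n) g hgmem, hinner_u l (s n) g hgmem,
        ← integral_sub (int_mul_bdd (htf_int k _) hgm.aestronglyMeasurable hgb)
          (int_mul_bdd (htf_int l _) hgm.aestronglyMeasurable hgb)]
      have heq : (fun ω => tf k (s n) ω * g ω - tf l (s n) ω * g ω) =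
          fun ω => (tf k (s n) ω - tf l (s n) ω) * g ω := funext fun ω => by ring
      rw [heq]
      refine le_trans (abs_int_mul_le _ g ((htf_int k _).sub (htf_int l _))
        hgm.aestronglyMeasurable 1 hgb) ?_
      rw [one_mul]
      have step : ∫ ω, |tf k (s n) ω - tf l (s n) ω| ∂μ ≤
          ∫ ω, (|f (s n) ω - tf k (s n) ω| + |f (s n) ω - tf l (s n) ω|) ∂μ := by
        refine integral_mono ((htf_int k _).sub (htf_int l _)).abs
          ((((hInt _).sub (htf_int k _)).abs).add (((hInt _).sub (htf_int l _)).abs))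
          fun ω => ?_
        calc |tf k (s n) ω - tf l (s n) ω|
            = |(tf k (s n) ω - f (s n) ω) + (f (s n) ω - tf l (s n) ω)| := by ring_nf
          _ ≤ |tf k (s n) ω - f (s n) ω| + |f (s n) ω - tf l (s n) ω| := abs_add_le _ _
          _ = |f (s n) ω - tf k (s n) ω| + |f (s n) ω - tf l (s n) ω| := by
              rw [abs_sub_comm]
      refine step.trans ?_
      have hik : Integrable (fun ω => |f (s n) ω - tf k (s n) ω|) μ :=
        ((hInt _).sub (htf_int k _)).abs
      have hil : Integrable (fun ω => |f (s n) ω - tf l (s n) ω|) μ :=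
        ((hInt _).sub (htf_int l _)).abs
      rw [integral_add hik hil]
      have h1 := hk₀ k hk (s n)
      have h2 := hk₀ l hl (s n)
      linarith
    have hlim := le_of_tendsto hconv.abs (Eventually.of_forall hbound)
    rw [inner_coe_toLp (zk k) g hgmem, inner_coe_toLp (zk l) g hgmem,
      ← integral_sub (int_mul_bdd (hzkint k) hgm.aestronglyMeasurable hgb)
        (int_mul_bdd (hzkint l) hgm.aestronglyMeasurable hgb)] at hlim
    have heq2 : (fun ω => (zk k : X → ℝ) ω * g ω - (zk l : X → ℝ) ω * g ω) =
        fun ω => ((zk k : X → ℝ) ω - (zk l : X → ℝ) ω) * g ω := funext fun ω => by ring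
    rwa [heq2] at hlim
  -- L¹ elements and Cauchy sequence
  set w : ℕ → Lp ℝ 1 μ := fun k =>
    MemLp.toLp (zk k : X → ℝ) (memLp_one_iff_integrable.mpr (hzkint k)) with hwdef
  have hwcoe : ∀ k, (w k : X → ℝ) =ᵐ[μ] (zk k : X → ℝ) := fun k => MemLp.coeFn_toLp _
  have hwdist : ∀ k l, ‖w k - w l‖ = ∫ ω, |(zk k : X → ℝ) ω - (zk l : X → ℝ) ω| ∂μ := by
    intro k l
    rw [L1_norm_sub_eq]
    refine integral_congr_ae ?_
    filter_upwards [hwcoe k, hwcoe l] with ω h1 h2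
    rw [h1, h2]
  have hwC : CauchySeq w := by
    rw [Metric.cauchySeq_iff]
    intro ε hε
    obtain ⟨k₀, hk₀⟩ := hdual (ε / 3) (by positivity)
    refine ⟨k₀, fun k hk l hl => ?_⟩
    rw [dist_eq_norm, hwdist k l]
    calc ∫ ω, |(zk k : X → ℝ) ω - (zk l : X → ℝ) ω| ∂μ ≤ 2 * (ε / 3) := hk₀ k hk l hl
      _ < ε := by linarith
  obtain ⟨winf, hwinf⟩ := cauchySeq_tendsto_of_complete hwC
  refine ⟨s, hsmono, (winf : X → ℝ), L1.integrable_coeFn winf, ?_⟩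
  intro g hgm ⟨B, hgB⟩
  have hgb' : ∀ ω, |g ω| ≤ max B 0 := fun ω => by
    rw [← Real.norm_eq_abs]; exact (hgB ω).trans (le_max_left _ _)
  set B' : ℝ := max B 0 + 1 with hB'def
  have hB'pos : 0 < B' := by positivity
  have hgb : ∀ ω, |g ω| ≤ B' := fun ω => (hgb' ω).trans (by linarith)
  have hgmem : MemLp g 2 μ := MemLp.of_bound hgm.aestronglyMeasurable B'
    (Eventually.of_forall fun ω => by rw [Real.norm_eq_abs]; exact hgb ω)
  rw [Metric.tendsto_atTop]
  intro ε hε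
  obtain ⟨k₀, hk₀⟩ := htailI (ε / (4 * B')) (by positivity)
  -- choose k₁ with ‖w k - winf‖ small
  have hwinf' := (Metric.tendsto_atTop.mp hwinf) (ε / (4 * B')) (by positivity)
  obtain ⟨k₁, hk₁⟩ := hwinf'
  set k : ℕ := max k₀ k₁ with hkdef
  -- weak convergence for this k
  obtain ⟨N, hN⟩ := (Metric.tendsto_atTop.mp (hzk k (hgmem.toLp g))) (ε / 4) (by positivity)
  refine ⟨N, fun n hn => ?_⟩
  rw [Real.dist_eq]
  -- three-term decomposition
  have hterm1 : |∫ ω, f (s n) ω * g ω ∂μ - ∫ ω, tf k (s n) ω * g ω ∂μ| ≤ ε / 4 := by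
    rw [← integral_sub (int_mul_bdd (hInt _) hgm.aestronglyMeasurable hgb)
      (int_mul_bdd (htf_int k _) hgm.aestronglyMeasurable hgb)]
    have heq : (fun ω => f (s n) ω * g ω - tf k (s n) ω * g ω) =
        fun ω => (f (s n) ω - tf k (s n) ω) * g ω := funext fun ω => by ring
    rw [heq]
    refine le_trans (abs_int_mul_le _ g ((hInt _).sub (htf_int k _))
      hgm.aestronglyMeasurable B' hgb) ?_
    have := hk₀ k (le_max_left _ _) (s n)
    calc B' * ∫ ω, |f (s n) ω - tf k (s n) ω| ∂μ ≤ B' * (ε / (4 * B')) := by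
          gcongr
      _ = ε / 4 := by field_simp
  have hterm2 : |∫ ω, tf k (s n) ω * g ω ∂μ - ∫ ω, (zk k : X → ℝ) ω * g ω ∂μ| < ε / 4 := by
    have := hN n hn
    rw [Real.dist_eq, hinner_u k (s n) g hgmem, inner_coe_toLp (zk k) g hgmem] at this
    exact this
  have hterm3 : |∫ ω, (zk k : X → ℝ) ω * g ω ∂μ - ∫ ω, (winf : X → ℝ) ω * g ω ∂μ| ≤ ε / 4 := by
    rw [← integral_sub (int_mul_bdd (hzkint k) hgm.aestronglyMeasurable hgb)
      (int_mul_bdd (L1.integrable_coeFn winf) hgm.aestronglyMeasurable hgb)]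
    have heq : (fun ω => (zk k : X → ℝ) ω * g ω - (winf : X → ℝ) ω * g ω) =
        fun ω => ((zk k : X → ℝ) ω - (winf : X → ℝ) ω) * g ω := funext fun ω => by ring
    rw [heq]
    refine le_trans (abs_int_mul_le (fun ω => (zk k : X → ℝ) ω - (winf : X → ℝ) ω) g
      ((hzkint k).sub (L1.integrable_coeFn winf)) hgm.aestronglyMeasurable B' hgb) ?_
    have hdist : ∫ ω, |(zk k : X → ℝ) ω - (winf : X → ℝ) ω| ∂μ = ‖w k - winf‖ := by
      rw [L1_norm_sub_eq]
      refine (integral_congr_ae ?_).symm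
      filter_upwards [hwcoe k] with ω h1
      rw [h1]
    rw [hdist]
    have := hk₁ k (le_max_right _ _)
    rw [dist_eq_norm] at this
    calc B' * ‖w k - winf‖ ≤ B' * (ε / (4 * B')) := by gcongr
      _ = ε / 4 := by field_simp
  calc |∫ ω, f (s n) ω * g ω ∂μ - ∫ ω, (winf : X → ℝ) ω * g ω ∂μ|
      ≤ |∫ ω, f (s n) ω * g ω ∂μ - ∫ ω, tf k (s n) ω * g ω ∂μ| +
        |∫ ω, tf k (s n) ω * g ω ∂μ - ∫ ω, (zk k : X → ℝ) ω * g ω ∂μ| +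
        |∫ ω, (zk k : X → ℝ) ω * g ω ∂μ - ∫ ω, (winf : X → ℝ) ω * g ω ∂μ| := by
        have h4 := abs_sub_le (∫ ω, f (s n) ω * g ω ∂μ) (∫ ω, (zk k : X → ℝ) ω * g ω ∂μ)
          (∫ ω, (winf : X → ℝ) ω * g ω ∂μ)
        have h5 := abs_sub_le (∫ ω, f (s n) ω * g ω ∂μ) (∫ ω, tf k (s n) ω * g ω ∂μ)
          (∫ ω, (zk k : X → ℝ) ω * g ω ∂μ)
        linarith
    _ < ε := by linarith

/-- Let `μ` be a finite complete measure and `γ` a maximal monotone graph in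
`ℝ × ℝ` with full domain and `(0,0) ∈ γ`. If `(xₙ, yₙ) ∈ γ` a.e. and `(xₙ yₙ)`
is bounded in `L¹(μ)`, then `(yₙ)` is uniformly integrable (bounded in `L¹` and
uniformly absolutely continuous), hence relatively weakly sequentially compact
in `L¹(μ)`. -/
theorem stmt5 {X : Type*} [MeasurableSpace X] (μ : Measure X) [IsFiniteMeasure μ]
    [μ.IsComplete]
    (γ : Set (ℝ × ℝ))
    (hmono : ∀ p ∈ γ, ∀ q ∈ γ, 0 ≤ (p.1 - q.1) * (p.2 - q.2))
    (hmax : ∀ B : Set (ℝ × ℝ), γ ⊆ B →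
      (∀ p ∈ B, ∀ q ∈ B, 0 ≤ (p.1 - q.1) * (p.2 - q.2)) → B = γ)
    (hdom : ∀ a : ℝ, ∃ b : ℝ, (a, b) ∈ γ) (h0 : ((0 : ℝ), (0 : ℝ)) ∈ γ)
    (xn yn : ℕ → X → ℝ) (hxnm : ∀ n, Measurable (xn n)) (hynm : ∀ n, Measurable (yn n))
    (hγ : ∀ n, ∀ᵐ ω ∂μ, (xn n ω, yn n ω) ∈ γ)
    (C : ℝ) (hbd : ∀ n, ∫⁻ ω, ‖xn n ω * yn n ω‖₊ ∂μ ≤ ENNReal.ofReal C) :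
    (∃ C' : ℝ, ∀ n, ∫⁻ ω, ‖yn n ω‖₊ ∂μ ≤ ENNReal.ofReal C') ∧
    UnifIntegrable yn 1 μ ∧
    (∀ φ : ℕ → ℕ, StrictMono φ → ∃ ψ : ℕ → ℕ, StrictMono ψ ∧
      ∃ z : X → ℝ, Integrable z μ ∧
        ∀ g : X → ℝ, Measurable g → (∃ B : ℝ, ∀ ω, ‖g ω‖ ≤ B) →
          Tendsto (fun n => ∫ ω, yn (φ (ψ n)) ω * g ω ∂μ) atTop
            (nhds (∫ ω, z ω * g ω ∂μ))) := by
  have h1 : ∃ C' : ℝ, ∀ n, ∫⁻ ω, ‖yn n ω‖₊ ∂μ ≤ ENNReal.ofReal C' := by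
    obtain ⟨K, hK0, hKp⟩ := gamma_bound γ hmono hdom h0 1 one_pos
    refine ⟨K * (μ Set.univ).toReal + max C 0, fun n => ?_⟩
    have hae : ∀ᵐ ω ∂μ, 0 ≤ xn n ω * yn n ω ∧ |yn n ω| ≤ K + xn n ω * yn n ω / 1 :=
      (hγ n).mono fun ω h => hKp _ h
    have := lint_bound μ (xn n) (yn n) (hxnm n) (hynm n) K 1 C one_pos hK0 hae (hbd n)
      Set.univ MeasurableSet.univ
    rw [Measure.restrict_univ] at this
    refine this.trans ?_
    rw [ENNReal.ofReal_one, div_one]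
    calc ENNReal.ofReal K * μ Set.univ + ENNReal.ofReal C
        ≤ ENNReal.ofReal (K * (μ Set.univ).toReal) + ENNReal.ofReal (max C 0) := by
          gcongr
          · rw [ENNReal.ofReal_mul hK0, ENNReal.ofReal_toReal (measure_ne_top μ _)]
          · exact le_max_left _ _
      _ ≤ ENNReal.ofReal (K * (μ Set.univ).toReal + max C 0) := by
          rw [ENNReal.ofReal_add (by positivity) (le_max_right _ _)]
  have h2 : UnifIntegrable yn 1 μ := by
    intro ε hε
    set M : ℝ := 2 * (max C 0 + 1) / ε with hMdef
    have hM : 0 < M := by positivity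
    obtain ⟨K, hK0, hKp⟩ := gamma_bound γ hmono hdom h0 M hM
    refine ⟨ε / (2 * (K + 1)), by positivity, fun n s hs hsδ => ?_⟩
    have hae : ∀ᵐ ω ∂μ, 0 ≤ xn n ω * yn n ω ∧ |yn n ω| ≤ K + xn n ω * yn n ω / M :=
      (hγ n).mono fun ω h => hKp _ h
    have hb := lint_bound μ (xn n) (yn n) (hxnm n) (hynm n) K M C hM hK0 hae (hbd n) s hs
    rw [eLpNorm_indicator_eq_eLpNorm_restrict hs, eLpNorm_one_eq_lintegral_enorm]
    refine hb.trans ?_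
    have hb1 : ENNReal.ofReal K * μ s ≤ ENNReal.ofReal (ε / 2) := by
      calc ENNReal.ofReal K * μ s ≤ ENNReal.ofReal K * ENNReal.ofReal (ε / (2 * (K + 1))) := by
            gcongr
        _ = ENNReal.ofReal (K * (ε / (2 * (K + 1)))) := by
            rw [ENNReal.ofReal_mul hK0]
        _ ≤ ENNReal.ofReal (ε / 2) := by
            apply ENNReal.ofReal_le_ofReal
            rw [← mul_div_assoc, div_le_div_iff₀ (by positivity) (by norm_num)]
            nlinarith
    have hb2 : ENNReal.ofReal C / ENNReal.ofReal M ≤ ENNReal.ofReal (ε / 2) := by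
      calc ENNReal.ofReal C / ENNReal.ofReal M
          ≤ ENNReal.ofReal (max C 0) / ENNReal.ofReal M := by
            gcongr; exact le_max_left _ _
        _ = ENNReal.ofReal (max C 0 / M) := (ENNReal.ofReal_div_of_pos hM).symm
        _ ≤ ENNReal.ofReal (ε / 2) := by
            apply ENNReal.ofReal_le_ofReal
            rw [hMdef, div_div_eq_mul_div, div_le_div_iff₀ (by positivity) (by norm_num)]
            nlinarith [le_max_right C 0, hε.le]
    calc ENNReal.ofReal K * μ s + ENNReal.ofReal C / ENNReal.ofReal M
        ≤ ENNReal.ofReal (ε / 2) + ENNReal.ofReal (ε / 2) := add_le_add hb1 hb2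
      _ = ENNReal.ofReal ε := by
          rw [← ENNReal.ofReal_add (by positivity) (by positivity)]; norm_num
  refine ⟨h1, h2, fun φ hφ => ?_⟩
  obtain ⟨C', hC'⟩ := h1
  have hUIφ : UnifIntegrable (fun n => yn (φ n)) 1 μ := by
    intro ε hε
    obtain ⟨δ, hδ, hh⟩ := h2 hε
    exact ⟨δ, hδ, fun i s hs hμs => hh (φ i) s hs hμs⟩
  exact part3 μ (fun n => yn (φ n)) (fun n => hynm (φ n)) C' (fun n => hC' (φ n)) hUIφ
end

section
/- Let S be a strongly continuous compact semigroup on a Banach space E (S(t) is a compact operator for every t > 0), T > 0, and H a uniformly integrable subset of L¹(0,T; E). Then the set Γ(H) = { t ↦ ∫₀ᵗ S(t−s) φ(s) ds : φ ∈ H } is relatively compact in C([0,T]; E). -/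
open MeasureTheory Set

/-- Compactness of deterministic convolutions: if `S` is a strongly continuous
semigroup on a Banach space `E` with `S(a)` compact for every `a > 0`, `T > 0`,
and `H ⊆ L¹(0,T;E)` is uniformly integrable, then
`Γ(H) = { t ↦ ∫₀ᵗ S(t-s) φ(s) ds : φ ∈ H }` is relatively compact in `C([0,T];E)`. -/
theorem stmt9 {E : Type*} [NormedAddCommGroup E] [NormedSpace ℝ E] [CompleteSpace E]
    (S : ℝ → E →L[ℝ] E) (hS0 : S 0 = 1)
    (hSadd : ∀ s t : ℝ, 0 ≤ s → 0 ≤ t → S (s + t) = (S s).comp (S t))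
    (hScont : ∀ x : E, ContinuousOn (fun t => S t x) (Set.Ici 0))
    (hScomp : ∀ a : ℝ, 0 < a → IsCompactOperator (S a))
    (T : ℝ) (hT : 0 < T)
    (H : Set (ℝ → E)) (hHint : ∀ φ ∈ H, IntegrableOn φ (Set.Icc 0 T))
    (hHbd : ∃ C : ℝ, ∀ φ ∈ H, (∫ s in Set.Icc (0:ℝ) T, ‖φ s‖) ≤ C)
    (hHui : ∀ ε > (0:ℝ), ∃ δ > (0:ℝ), ∀ φ ∈ H, ∀ B : Set ℝ, B ⊆ Set.Icc 0 T →
      MeasurableSet B → volume B < ENNReal.ofReal δ → (∫ s in B, ‖φ s‖) < ε) :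
    IsCompact (closure {g : C(Set.Icc (0:ℝ) T, E) | ∃ φ ∈ H,
      ∀ t : Set.Icc (0:ℝ) T, g t = ∫ s in (0:ℝ)..(t:ℝ), S ((t:ℝ) - s) (φ s)}) := by
  have hT0 : (0:ℝ) ≤ T := hT.le
  -- uniform bound on the semigroup on [0,T]
  obtain ⟨M0, hM0⟩ : ∃ M0, ∀ t : Icc (0:ℝ) T, ‖S t‖ ≤ M0 := by
    apply banach_steinhaus
    intro x
    obtain ⟨C0, hC0⟩ := (isCompact_Icc (a := (0:ℝ)) (b := T)).exists_bound_of_continuousOn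
      ((hScont x).mono Icc_subset_Ici_self)
    exact ⟨C0, fun t => hC0 t t.2⟩
  set M : ℝ := max M0 1 with hMdef
  have hM1 : (1:ℝ) ≤ M := le_max_right _ _
  have hMpos : (0:ℝ) < M := lt_of_lt_of_le one_pos hM1
  have hM : ∀ r ∈ Icc (0:ℝ) T, ‖S r‖ ≤ M := fun r hr =>
    le_trans (hM0 ⟨r, hr⟩) (le_max_left _ _)
  -- clamped semigroup, strongly continuous on all of ℝ and uniformly bounded
  set π : ℝ → ℝ := fun r => max (min r T) 0 with hπdef
  have hπmem : ∀ r, π r ∈ Icc (0:ℝ) T := fun r =>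
    ⟨le_max_right _ _, max_le (min_le_right _ _) hT0⟩
  have hπeq : ∀ r ∈ Icc (0:ℝ) T, π r = r := by
    intro r hr
    simp only [hπdef]
    rw [min_eq_left hr.2, max_eq_left hr.1]
  set Sc : ℝ → E →L[ℝ] E := fun r => S (π r) with hScdef
  have hSceq : ∀ r ∈ Icc (0:ℝ) T, Sc r = S r := by
    intro r hr; simp only [hScdef, hπeq r hr]
  have hScnorm : ∀ (r : ℝ) (x : E), ‖Sc r x‖ ≤ M * ‖x‖ := by
    intro r x
    calc ‖Sc r x‖ ≤ ‖Sc r‖ * ‖x‖ := (Sc r).le_opNorm x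
    _ ≤ M * ‖x‖ := mul_le_mul_of_nonneg_right (hM _ (hπmem r)) (norm_nonneg x)
  have hSccont : ∀ x : E, Continuous fun r => Sc r x := by
    intro x
    have hπc : Continuous π := (continuous_id.min continuous_const).max continuous_const
    exact (hScont x).comp_continuous hπc (fun r => (hπmem r).1)
  -- joint continuity
  have hG : Continuous fun p : ℝ × E => Sc p.1 p.2 := by
    rw [continuous_iff_continuousAt]
    rintro ⟨r0, x0⟩
    rw [Metric.continuousAt_iff]
    intro ε hε
    obtain ⟨δ1, hδ1, hδ1'⟩ := Metric.continuousAt_iff.1 (hSccont x0).continuousAt (ε/2)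
      (half_pos hε)
    refine ⟨min δ1 (ε/(2*M)), lt_min hδ1 (by positivity), ?_⟩
    rintro ⟨r, x⟩ hp
    have hfst : dist r r0 ≤ dist ((r,x) : ℝ × E) (r0,x0) := by
      rw [Prod.dist_eq]; exact le_max_left _ _
    have hsnd : dist x x0 ≤ dist ((r,x) : ℝ × E) (r0,x0) := by
      rw [Prod.dist_eq]; exact le_max_right _ _
    have h1 : dist r r0 < δ1 := lt_of_le_of_lt hfst
      (lt_of_lt_of_le hp (min_le_left _ _))
    have h2 : dist x x0 < ε/(2*M) := lt_of_le_of_lt hsnd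
      (lt_of_lt_of_le hp (min_le_right _ _))
    calc dist (Sc r x) (Sc r0 x0)
        ≤ dist (Sc r x) (Sc r x0) + dist (Sc r x0) (Sc r0 x0) := dist_triangle _ _ _
    _ < ε/2 + ε/2 := by
        refine add_lt_add_of_le_of_lt ?_ (hδ1' h1)
        rw [dist_eq_norm, ← map_sub]
        calc ‖Sc r (x - x0)‖ ≤ M * ‖x - x0‖ := hScnorm _ _
        _ = M * dist x x0 := by rw [dist_eq_norm]
        _ ≤ M * (ε/(2*M)) := mul_le_mul_of_nonneg_left h2.le hMpos.le
        _ = ε/2 := by field_simp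
    _ = ε := add_halves ε
  -- integrability
  have hIntc : ∀ φ ∈ H, ∀ v : ℝ, IntegrableOn (fun s => Sc (v - s) (φ s)) (Icc 0 T) := by
    intro φ hφ v
    have hpair : AEStronglyMeasurable (fun s => ((v - s : ℝ), φ s))
        (volume.restrict (Icc 0 T)) :=
      ((continuous_const.sub continuous_id).aestronglyMeasurable).prodMk (hHint φ hφ).1
    have hsm : AEStronglyMeasurable (fun s => Sc (v - s) (φ s))
        (volume.restrict (Icc 0 T)) := hG.comp_aestronglyMeasurable hpair
    refine Integrable.mono' (((hHint φ hφ).norm).const_mul M) hsm ?_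
    filter_upwards with s using hScnorm _ _
  have hIntB : ∀ φ ∈ H, ∀ (v : ℝ), ∀ B ⊆ Icc (0:ℝ) T,
      IntegrableOn (fun s => Sc (v - s) (φ s)) B :=
    fun φ hφ v B hB => (hIntc φ hφ v).mono_set hB
  have hIntφ : ∀ φ ∈ H, ∀ B ⊆ Icc (0:ℝ) T, IntegrableOn (fun s => ‖φ s‖) B :=
    fun φ hφ B hB => IntegrableOn.mono_set ((hHint φ hφ).norm) hB
  obtain ⟨C0, hC0⟩ := hHbd
  set C : ℝ := max C0 0 with hCdef
  have hCnn : (0:ℝ) ≤ C := le_max_right _ _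
  have hC : ∀ φ ∈ H, ∀ B ⊆ Icc (0:ℝ) T, (∫ s in B, ‖φ s‖) ≤ C := by
    intro φ hφ B hB
    calc (∫ s in B, ‖φ s‖) ≤ ∫ s in Icc (0:ℝ) T, ‖φ s‖ :=
          setIntegral_mono_set ((hHint φ hφ).norm)
            (Filter.Eventually.of_forall fun s => norm_nonneg _) hB.eventuallyLE
    _ ≤ C0 := hC0 φ hφ
    _ ≤ C := le_max_left _ _
  have hNB : ∀ φ ∈ H, ∀ (v : ℝ), ∀ B ⊆ Icc (0:ℝ) T, MeasurableSet B →
      ‖∫ s in B, Sc (v - s) (φ s)‖ ≤ M * ∫ s in B, ‖φ s‖ := by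
    intro φ hφ v B hB hBm
    calc ‖∫ s in B, Sc (v - s) (φ s)‖ ≤ ∫ s in B, ‖Sc (v - s) (φ s)‖ :=
          norm_integral_le_integral_norm _
    _ ≤ ∫ s in B, M * ‖φ s‖ :=
          setIntegral_mono_on ((hIntB φ hφ v B hB).norm) ((hIntφ φ hφ B hB).const_mul M)
            hBm (fun s _ => hScnorm _ _)
    _ = M * ∫ s in B, ‖φ s‖ := integral_const_mul _ _
  -- uniform integrability on small Ioc's
  have hUI : ∀ ε > (0:ℝ), ∃ δ > (0:ℝ), ∀ φ ∈ H, ∀ a b : ℝ, 0 ≤ a → b ≤ T → b - a < δ →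
      (∫ s in Ioc a b, ‖φ s‖) < ε := by
    intro ε hε
    obtain ⟨δ, hδ, hδ'⟩ := hHui ε hε
    refine ⟨δ, hδ, fun φ hφ a b ha hb hab => ?_⟩
    rcases le_or_gt a b with hab' | hab'
    · refine hδ' φ hφ _ (fun s hs => ⟨ha.trans hs.1.le, hs.2.trans hb⟩) measurableSet_Ioc ?_
      rw [Real.volume_Ioc]
      exact (ENNReal.ofReal_lt_ofReal_iff hδ).2 hab
    · rw [Set.Ioc_eq_empty (not_lt.2 hab'.le), Measure.restrict_empty, integral_zero_measure]
      exact hε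
  -- uniform operator-norm continuity away from 0
  have hBnorm : ∀ ε > (0:ℝ), ∀ η > (0:ℝ), ∃ δ > (0:ℝ), ∀ a b : ℝ, η ≤ a → a ≤ T → a ≤ b →
      b ≤ T → b - a < δ → ∀ x : E, ‖S b x - S a x‖ ≤ ε * ‖x‖ := by
    intro ε hε η hη
    obtain ⟨K, hKc, hKsub⟩ : ∃ K : Set E, IsCompact K ∧
        S (η/2) '' Metric.closedBall 0 1 ⊆ K := by
      exact ⟨closure (S (η/2) '' Metric.closedBall 0 1),
        (hScomp (η/2) (half_pos hη)).isCompact_closure_image_closedBall 1, subset_closure⟩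
    have hUC := (isCompact_Icc.prod hKc).uniformContinuousOn_of_continuous
      (s := Icc (0:ℝ) T ×ˢ K) hG.continuousOn
    rw [Metric.uniformContinuousOn_iff] at hUC
    obtain ⟨δ, hδ, hδ'⟩ := hUC ε hε
    refine ⟨δ, hδ, fun a b ha haT hab hbT habδ x => ?_⟩
    rcases eq_or_ne x 0 with rfl | hx
    · simp
    have hxn : 0 < ‖x‖ := norm_pos_iff.2 hx
    set y : E := S (η/2) (‖x‖⁻¹ • x) with hy
    have hyK : y ∈ K := hKsub ⟨‖x‖⁻¹ • x, by
      simp [norm_smul, abs_of_nonneg (inv_nonneg.2 hxn.le), inv_mul_cancel₀ hxn.ne'], rfl⟩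
    have keyc : ∀ c : ℝ, η ≤ c → c ≤ T → S c x = ‖x‖ • Sc (c - η/2) y := by
      intro c hc hcT
      have h2 : S c = (S (c - η/2)).comp (S (η/2)) := by
        rw [← hSadd _ _ (by linarith) (by linarith)]
        norm_num
      have h3 : Sc (c - η/2) = S (c - η/2) := hSceq _ ⟨by linarith, by linarith⟩
      have h4 : S (η/2) x = ‖x‖ • y := by
        rw [hy, ← ContinuousLinearMap.map_smul, smul_inv_smul₀ hxn.ne']
      rw [h2, h3]
      simp only [ContinuousLinearMap.comp_apply, h4, ContinuousLinearMap.map_smul]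
    have hb' := keyc b (le_trans ha hab) hbT
    have ha' := keyc a ha haT
    have hdist : dist ((b - η/2, y) : ℝ × E) ((a - η/2, y) : ℝ × E) < δ := by
      rw [Prod.dist_eq]
      simp only [dist_self]
      rw [max_eq_left dist_nonneg, Real.dist_eq,
        show b - η/2 - (a - η/2) = b - a by ring, abs_of_nonneg (by linarith)]
      exact habδ
    have hmem1 : ((b - η/2, y) : ℝ × E) ∈ Icc (0:ℝ) T ×ˢ K :=
      ⟨⟨by linarith, by linarith⟩, hyK⟩
    have hmem2 : ((a - η/2, y) : ℝ × E) ∈ Icc (0:ℝ) T ×ˢ K :=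
      ⟨⟨by linarith, by linarith⟩, hyK⟩
    have hd := hδ' _ hmem1 _ hmem2 hdist
    calc ‖S b x - S a x‖ = ‖x‖ * dist (Sc (b - η/2) y) (Sc (a - η/2) y) := by
          rw [hb', ha', dist_eq_norm, ← smul_sub, norm_smul, Real.norm_of_nonneg hxn.le]
    _ ≤ ‖x‖ * ε := mul_le_mul_of_nonneg_left hd.le hxn.le
    _ = ε * ‖x‖ := mul_comm _ _
  -- the set of members reformulated
  set Γ : Set C(Set.Icc (0:ℝ) T, E) := {g : C(Set.Icc (0:ℝ) T, E) | ∃ φ ∈ H,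
      ∀ t : Set.Icc (0:ℝ) T, g t = ∫ s in (0:ℝ)..(t:ℝ), S ((t:ℝ) - s) (φ s)} with hΓdef
  have hΓ : ∀ g ∈ Γ, ∃ φ ∈ H, ∀ t : Set.Icc (0:ℝ) T,
      g t = ∫ s in Ioc (0:ℝ) (t:ℝ), Sc ((t:ℝ) - s) (φ s) := by
    rintro g ⟨φ, hφ, hrep⟩
    refine ⟨φ, hφ, fun t => ?_⟩
    rw [hrep t, intervalIntegral.integral_of_le t.2.1]
    refine setIntegral_congr_fun measurableSet_Ioc (fun s hs => ?_)
    rw [hSceq _ ⟨by linarith [hs.2], by linarith [hs.1, t.2.2]⟩]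
  -- total boundedness of the set of all values
  set V : Set E := {x : E | ∃ φ ∈ H, ∃ t ∈ Icc (0:ℝ) T,
      x = ∫ s in Ioc (0:ℝ) t, Sc (t - s) (φ s)} with hVdef
  have hVtb : TotallyBounded V := by
    rw [Metric.totallyBounded_iff]
    intro ε hε
    obtain ⟨δ1, hδ1, hδ1'⟩ := hUI (ε/(8*M)) (by positivity)
    set a : ℝ := min (δ1/2) T with hadef
    have ha0 : 0 < a := lt_min (half_pos hδ1) hT
    have haT : a ≤ T := min_le_right _ _
    have haδ : a < δ1 := lt_of_le_of_lt (min_le_left _ _) (by linarith)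
    have hM8 : M * (ε/(8*M)) ≤ ε/2 := by
      rw [show M * (ε/(8*M)) = ε/8 * (M/M) by ring, div_self hMpos.ne', mul_one]
      linarith
    obtain ⟨K, hKc, hKsub⟩ : ∃ K : Set E, IsCompact K ∧
        S a '' Metric.closedBall 0 (M*C) ⊆ K :=
      ⟨_, (hScomp a ha0).isCompact_closure_image_closedBall (M*C), subset_closure⟩
    have hclose : ∀ x ∈ V, ∃ y ∈ K, dist x y < ε/2 := by
      rintro x ⟨φ, hφ, t, ht, rfl⟩
      rcases le_or_gt t a with hta | hta
      · refine ⟨0, hKsub ⟨0, by simp [mul_nonneg hMpos.le hCnn], map_zero _⟩, ?_⟩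
        rw [dist_zero_right]
        have h1 : ‖∫ s in Ioc (0:ℝ) t, Sc (t - s) (φ s)‖ ≤ M * ∫ s in Ioc (0:ℝ) t, ‖φ s‖ :=
          hNB φ hφ t _ (fun s hs => ⟨hs.1.le, hs.2.trans ht.2⟩) measurableSet_Ioc
        have h2 : (∫ s in Ioc (0:ℝ) t, ‖φ s‖) < ε/(8*M) :=
          hδ1' φ hφ 0 t le_rfl ht.2 (by linarith)
        calc ‖∫ s in Ioc (0:ℝ) t, Sc (t - s) (φ s)‖
            ≤ M * ∫ s in Ioc (0:ℝ) t, ‖φ s‖ := h1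
        _ < M * (ε/(8*M)) := mul_lt_mul_of_pos_left h2 hMpos
        _ ≤ ε/2 := hM8
      · set z : E := ∫ s in Ioc (0:ℝ) (t - a), Sc ((t - a) - s) (φ s) with hz
        have hsub1 : Ioc (0:ℝ) (t-a) ⊆ Icc 0 T :=
          fun s hs => ⟨hs.1.le, le_trans hs.2 (by linarith [ht.2])⟩
        have hsub2 : Ioc (t-a) t ⊆ Icc (0:ℝ) T :=
          fun s hs => ⟨le_trans (by linarith) hs.1.le, hs.2.trans ht.2⟩
        have hsub3 : Ioc (0:ℝ) t ⊆ Icc 0 T := fun s hs => ⟨hs.1.le, hs.2.trans ht.2⟩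
        have hzb : ‖z‖ ≤ M * C := by
          calc ‖z‖ ≤ M * ∫ s in Ioc (0:ℝ) (t-a), ‖φ s‖ :=
              hNB φ hφ _ _ hsub1 measurableSet_Ioc
          _ ≤ M * C := mul_le_mul_of_nonneg_left (hC φ hφ _ hsub1) hMpos.le
        refine ⟨S a z, hKsub ⟨z, mem_closedBall_zero_iff.2 hzb, rfl⟩, ?_⟩
        have heq1 : S a z = ∫ s in Ioc (0:ℝ) (t - a), Sc (t - s) (φ s) := by
          rw [hz, ← ContinuousLinearMap.integral_comp_comm (S a) (hIntB φ hφ (t-a) _ hsub1)]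
          refine setIntegral_congr_fun measurableSet_Ioc (fun s hs => ?_)
          have h1 : Sc (t - a - s) = S (t - a - s) :=
            hSceq _ ⟨by linarith [hs.2], by linarith [hs.1, ht.2]⟩
          have h2 : Sc (t - s) = S (t - s) :=
            hSceq _ ⟨by linarith [hs.2], by linarith [hs.1, ht.2]⟩
          simp only [h1, h2]
          rw [show (t : ℝ) - s = a + (t - a - s) by ring,
            hSadd a _ ha0.le (by linarith [hs.2])]
          rfl
        have hsplit : (∫ s in Ioc (0:ℝ) t, Sc (t - s) (φ s)) =
            (∫ s in Ioc (0:ℝ) (t-a), Sc (t - s) (φ s))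
              + ∫ s in Ioc (t-a) t, Sc (t - s) (φ s) := by
          rw [← setIntegral_union (Set.Ioc_disjoint_Ioc_of_le le_rfl) measurableSet_Ioc
            (hIntB φ hφ t _ hsub1) (hIntB φ hφ t _ hsub2),
            Set.Ioc_union_Ioc_eq_Ioc (by linarith) (by linarith)]
        rw [dist_eq_norm, hsplit, heq1, add_sub_cancel_left]
        calc ‖∫ s in Ioc (t-a) t, Sc (t - s) (φ s)‖
            ≤ M * ∫ s in Ioc (t-a) t, ‖φ s‖ := hNB φ hφ t _ hsub2 measurableSet_Ioc
        _ < M * (ε/(8*M)) := mul_lt_mul_of_pos_left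
            (hδ1' φ hφ (t-a) t (by linarith) ht.2 (by linarith)) hMpos
        _ ≤ ε/2 := hM8
    obtain ⟨F, hF, hFc⟩ := (Metric.totallyBounded_iff.1 hKc.totallyBounded) (ε/2) (half_pos hε)
    refine ⟨F, hF, fun x hx => ?_⟩
    obtain ⟨y, hyK, hxy⟩ := hclose x hx
    obtain ⟨c, hcF, hyc⟩ := mem_iUnion₂.1 (hFc hyK)
    refine mem_iUnion₂.2 ⟨c, hcF, ?_⟩
    rw [Metric.mem_ball] at hyc ⊢
    calc dist x c ≤ dist x y + dist y c := dist_triangle _ _ _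
    _ < ε/2 + ε/2 := add_lt_add hxy hyc
    _ = ε := add_halves ε
  have hVc : IsCompact (closure V) :=
    TotallyBounded.isCompact_of_isClosed hVtb.closure isClosed_closure
  -- key equicontinuity estimate
  have key : ∀ ε > (0:ℝ), ∃ δ > (0:ℝ), ∀ φ ∈ H, ∀ u v : ℝ, 0 ≤ u → u ≤ v → v ≤ T →
      v - u < δ →
      ‖(∫ s in Ioc (0:ℝ) v, Sc (v - s) (φ s)) - ∫ s in Ioc (0:ℝ) u, Sc (u - s) (φ s)‖ ≤ ε := by
    intro ε hε
    set ε1 : ℝ := ε/(6*M) with hε1def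
    have hε1 : 0 < ε1 := by positivity
    set ε2 : ℝ := ε/(2*(C+1)) with hε2def
    have hε2 : 0 < ε2 := by positivity
    obtain ⟨δ1, hδ1, hδ1'⟩ := hUI ε1 hε1
    set η : ℝ := δ1/2 with hηdef
    have hη : 0 < η := half_pos hδ1
    obtain ⟨δ2, hδ2, hδ2'⟩ := hBnorm ε2 hε2 η hη
    refine ⟨min δ1 δ2, lt_min hδ1 hδ2, fun φ hφ u v hu huv hvT hδuv => ?_⟩
    have hδa : v - u < δ1 := lt_of_lt_of_le hδuv (min_le_left _ _)
    have hδb : v - u < δ2 := lt_of_lt_of_le hδuv (min_le_right _ _)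
    have huT : u ≤ T := le_trans huv hvT
    set w : ℝ := max (u - η) 0 with hwdef
    have hw0 : 0 ≤ w := le_max_right _ _
    have hwu : w ≤ u := max_le (by linarith) hu
    have huw : u - w ≤ η := by
      rcases le_total (u - η) 0 with h | h
      · rw [hwdef, max_eq_right h]; linarith
      · rw [hwdef, max_eq_left h]; linarith
    have hsub0u : Ioc (0:ℝ) u ⊆ Icc 0 T := fun s hs => ⟨hs.1.le, hs.2.trans huT⟩
    have hsub0w : Ioc (0:ℝ) w ⊆ Icc 0 T := fun s hs => ⟨hs.1.le, hs.2.trans (hwu.trans huT)⟩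
    have hsubwu : Ioc w u ⊆ Icc (0:ℝ) T := fun s hs => ⟨le_trans hw0 hs.1.le, hs.2.trans huT⟩
    have hsubuv : Ioc u v ⊆ Icc (0:ℝ) T := fun s hs => ⟨le_trans hu hs.1.le, hs.2.trans hvT⟩
    have I1 := hIntB φ hφ v _ hsub0u
    have I2 := hIntB φ hφ u _ hsub0u
    have Idiff : IntegrableOn (fun s => Sc (v - s) (φ s) - Sc (u - s) (φ s)) (Ioc 0 u) :=
      I1.sub I2
    have hsplit1 : (∫ s in Ioc (0:ℝ) v, Sc (v - s) (φ s)) =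
        (∫ s in Ioc (0:ℝ) u, Sc (v - s) (φ s)) + ∫ s in Ioc u v, Sc (v - s) (φ s) := by
      rw [← setIntegral_union (Set.Ioc_disjoint_Ioc_of_le le_rfl) measurableSet_Ioc
        (hIntB φ hφ v _ hsub0u) (hIntB φ hφ v _ hsubuv), Set.Ioc_union_Ioc_eq_Ioc hu huv]
    have hsplit2 : (∫ s in Ioc (0:ℝ) u, (Sc (v - s) (φ s) - Sc (u - s) (φ s))) =
        (∫ s in Ioc (0:ℝ) w, (Sc (v - s) (φ s) - Sc (u - s) (φ s)))
          + ∫ s in Ioc w u, (Sc (v - s) (φ s) - Sc (u - s) (φ s)) := by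
      rw [← setIntegral_union (Set.Ioc_disjoint_Ioc_of_le le_rfl) measurableSet_Ioc
        (IntegrableOn.mono_set Idiff (Ioc_subset_Ioc_right hwu))
        (IntegrableOn.mono_set Idiff (Ioc_subset_Ioc_left hw0)),
        Set.Ioc_union_Ioc_eq_Ioc hw0 hwu]
    have hdiffeq : (∫ s in Ioc (0:ℝ) u, (Sc (v - s) (φ s) - Sc (u - s) (φ s))) =
        (∫ s in Ioc (0:ℝ) u, Sc (v - s) (φ s)) - ∫ s in Ioc (0:ℝ) u, Sc (u - s) (φ s) :=
      integral_sub I1 I2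
    have hiden : (∫ s in Ioc (0:ℝ) v, Sc (v - s) (φ s))
          - ∫ s in Ioc (0:ℝ) u, Sc (u - s) (φ s)
        = ((∫ s in Ioc (0:ℝ) w, (Sc (v - s) (φ s) - Sc (u - s) (φ s)))
           + ∫ s in Ioc w u, (Sc (v - s) (φ s) - Sc (u - s) (φ s)))
          + ∫ s in Ioc u v, Sc (v - s) (φ s) := by
      rw [hsplit1, ← hsplit2, hdiffeq]
      abel
    -- bound on (0, w]
    have hptB : ∀ s ∈ Ioc (0:ℝ) w, ‖Sc (v - s) (φ s) - Sc (u - s) (φ s)‖ ≤ ε2 * ‖φ s‖ := by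
      intro s hs
      have hsu : s ≤ u - η := by
        rcases le_or_gt (u - η) 0 with h | h
        · have hw : w = 0 := by rw [hwdef, max_eq_right h]
          rw [hw] at hs
          linarith [hs.1, hs.2]
        · have hw : w = u - η := by rw [hwdef, max_eq_left h.le]
          rw [hw] at hs
          exact hs.2
      have h1 : Sc (v - s) = S (v - s) :=
        hSceq _ ⟨by linarith [hs.1], by linarith [hs.1]⟩
      have h2 : Sc (u - s) = S (u - s) :=
        hSceq _ ⟨by linarith, by linarith [hs.1]⟩
      rw [h1, h2]
      exact hδ2' (u - s) (v - s) (by linarith) (by linarith [hs.1]) (by linarith)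
        (by linarith [hs.1]) (by linarith) (φ s)
    have hbB : ‖∫ s in Ioc (0:ℝ) w, (Sc (v - s) (φ s) - Sc (u - s) (φ s))‖ ≤ ε/2 := by
      calc ‖∫ s in Ioc (0:ℝ) w, (Sc (v - s) (φ s) - Sc (u - s) (φ s))‖
          ≤ ∫ s in Ioc (0:ℝ) w, ‖Sc (v - s) (φ s) - Sc (u - s) (φ s)‖ :=
            norm_integral_le_integral_norm _
      _ ≤ ∫ s in Ioc (0:ℝ) w, ε2 * ‖φ s‖ :=
            setIntegral_mono_on
              ((IntegrableOn.mono_set Idiff (Ioc_subset_Ioc_right hwu)).norm)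
              ((hIntφ φ hφ _ hsub0w).const_mul ε2) measurableSet_Ioc hptB
      _ = ε2 * ∫ s in Ioc (0:ℝ) w, ‖φ s‖ := integral_const_mul _ _
      _ ≤ ε2 * C := mul_le_mul_of_nonneg_left (hC φ hφ _ hsub0w) hε2.le
      _ ≤ ε/2 := by
            rw [hε2def, div_mul_eq_mul_div, div_le_div_iff₀ (by positivity) two_pos]
            nlinarith [hCnn, hε.le]
    -- bound on (w, u]
    have hptA : ∀ s ∈ Ioc w u, ‖Sc (v - s) (φ s) - Sc (u - s) (φ s)‖ ≤ (2*M) * ‖φ s‖ := by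
      intro s _
      calc ‖Sc (v - s) (φ s) - Sc (u - s) (φ s)‖
          ≤ ‖Sc (v - s) (φ s)‖ + ‖Sc (u - s) (φ s)‖ := norm_sub_le _ _
      _ ≤ (2*M) * ‖φ s‖ := by
            have := hScnorm (v - s) (φ s)
            have := hScnorm (u - s) (φ s)
            linarith
    have hbA : ‖∫ s in Ioc w u, (Sc (v - s) (φ s) - Sc (u - s) (φ s))‖ ≤ ε/3 := by
      calc ‖∫ s in Ioc w u, (Sc (v - s) (φ s) - Sc (u - s) (φ s))‖
          ≤ ∫ s in Ioc w u, ‖Sc (v - s) (φ s) - Sc (u - s) (φ s)‖ :=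
            norm_integral_le_integral_norm _
      _ ≤ ∫ s in Ioc w u, (2*M) * ‖φ s‖ :=
            setIntegral_mono_on
              ((IntegrableOn.mono_set Idiff (Ioc_subset_Ioc_left hw0)).norm)
              ((hIntφ φ hφ _ hsubwu).const_mul (2*M)) measurableSet_Ioc hptA
      _ = (2*M) * ∫ s in Ioc w u, ‖φ s‖ := integral_const_mul _ _
      _ ≤ (2*M) * ε1 := mul_le_mul_of_nonneg_left
            (hδ1' φ hφ w u hw0 huT (by linarith)).le (by positivity)
      _ = ε/3 := by
            rw [hε1def, show 2*M * (ε/(6*M)) = ε/3 * (M/M) by ring, div_self hMpos.ne',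
              mul_one]
    -- bound on (u, v]
    have hb3 : ‖∫ s in Ioc u v, Sc (v - s) (φ s)‖ ≤ ε/6 := by
      calc ‖∫ s in Ioc u v, Sc (v - s) (φ s)‖
          ≤ M * ∫ s in Ioc u v, ‖φ s‖ := hNB φ hφ v _ hsubuv measurableSet_Ioc
      _ ≤ M * ε1 := mul_le_mul_of_nonneg_left (hδ1' φ hφ u v hu hvT hδa).le hMpos.le
      _ = ε/6 := by
            rw [hε1def, show M * (ε/(6*M)) = ε/6 * (M/M) by ring, div_self hMpos.ne',
              mul_one]
    rw [hiden]
    have t1 := norm_add_le ((∫ s in Ioc (0:ℝ) w, (Sc (v - s) (φ s) - Sc (u - s) (φ s)))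
        + ∫ s in Ioc w u, (Sc (v - s) (φ s) - Sc (u - s) (φ s)))
      (∫ s in Ioc u v, Sc (v - s) (φ s))
    have t2 := norm_add_le (∫ s in Ioc (0:ℝ) w, (Sc (v - s) (φ s) - Sc (u - s) (φ s)))
      (∫ s in Ioc w u, (Sc (v - s) (φ s) - Sc (u - s) (φ s)))
    linarith
  -- conclude with Arzelà–Ascoli
  set e := ContinuousMap.isometryEquivBoundedOfCompact (Set.Icc (0:ℝ) T) E with hedef
  have hA : IsCompact (closure ((fun g => e g) '' Γ)) := by
    apply BoundedContinuousFunction.arzela_ascoli (closure V) hVc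
    · rintro f x ⟨g, hgΓ, rfl⟩
      obtain ⟨φ, hφ, hrep⟩ := hΓ g hgΓ
      have hx : (e g) x = g x := rfl
      rw [hx, hrep x]
      exact subset_closure ⟨φ, hφ, (x:ℝ), x.2, rfl⟩
    · intro x0
      rw [Metric.equicontinuousAt_iff]
      intro ε hε
      obtain ⟨δ, hδ, hkey⟩ := key (ε/2) (half_pos hε)
      refine ⟨δ, hδ, fun x hx i => ?_⟩
      obtain ⟨g, hgΓ, hge⟩ := i.2
      obtain ⟨φ, hφ, hrep⟩ := hΓ g hgΓ
      have hv0 : i.1 x0 = g x0 := by rw [← hge]; rfl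
      have hv : i.1 x = g x := by rw [← hge]; rfl
      have hdxx : |(x:ℝ) - (x0:ℝ)| < δ := by
        rw [← Real.dist_eq]
        exact lt_of_le_of_lt (le_of_eq (Subtype.dist_eq x x0).symm) hx
      rw [hv0, hv, hrep x0, hrep x, dist_eq_norm]
      rcases le_total ((x:ℝ)) ((x0:ℝ)) with hle | hle
      · have hb := hkey φ hφ (x:ℝ) (x0:ℝ) x.2.1 hle x0.2.2 (by
          have : (x0:ℝ) - (x:ℝ) ≤ |(x:ℝ) - (x0:ℝ)| := by
            rw [abs_sub_comm]; exact le_abs_self _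
          linarith)
        exact lt_of_le_of_lt hb (by linarith)
      · have hb := hkey φ hφ (x0:ℝ) (x:ℝ) x0.2.1 hle x.2.2 (by
          have : (x:ℝ) - (x0:ℝ) ≤ |(x:ℝ) - (x0:ℝ)| := le_abs_self _
          linarith)
        rw [norm_sub_rev]
        exact lt_of_le_of_lt hb (by linarith)
  have hconteq : Continuous fun g : C(Set.Icc (0:ℝ) T, E) => e g := e.continuous
  have hsub : closure Γ ⊆ (fun f => e.symm f) '' closure ((fun g => e g) '' Γ) := by
    intro g hg
    refine ⟨e g, map_mem_closure hconteq hg (fun y hy => ⟨y, hy, rfl⟩), ?_⟩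
    simp
  exact IsCompact.of_isClosed_subset (hA.image e.symm.continuous) isClosed_closure hsub
end

section
/- Under the hypotheses of the convolution compactness theorem (S compact C₀-semigroup, H ⊆ L¹(0,T;E) uniformly integrable), for each fixed t ∈ (0,T] the set { ∫₀ᵗ S(t−s) φ(s) ds : φ ∈ H } is relatively compact in E. -/
open MeasureTheory

/-- Pointwise relative compactness: if `S` is a C₀-semigroup on a Banach space
`E` with `S(a)` compact for every `a > 0`, and `H ⊆ L¹(0,T;E)` is uniformly
integrable, then for each fixed `t ∈ (0,T]` the set
`{ ∫₀ᵗ S(t-s) φ(s) ds : φ ∈ H }` is relatively compact in `E`. -/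
theorem stmt10 {E : Type*} [NormedAddCommGroup E] [NormedSpace ℝ E] [CompleteSpace E]
    (S : ℝ → E →L[ℝ] E) (hS0 : S 0 = 1)
    (hSadd : ∀ s t : ℝ, 0 ≤ s → 0 ≤ t → S (s + t) = (S s).comp (S t))
    (hScont : ∀ x : E, ContinuousOn (fun t => S t x) (Set.Ici 0))
    (hScomp : ∀ a : ℝ, 0 < a → IsCompactOperator (S a))
    (T : ℝ) (hT : 0 < T)
    (H : Set (ℝ → E)) (hHint : ∀ φ ∈ H, IntegrableOn φ (Set.Icc 0 T))
    (hHbd : ∃ C : ℝ, ∀ φ ∈ H, (∫ s in Set.Icc (0:ℝ) T, ‖φ s‖) ≤ C)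
    (hHui : ∀ ε > (0:ℝ), ∃ δ > (0:ℝ), ∀ φ ∈ H, ∀ B : Set ℝ, B ⊆ Set.Icc 0 T →
      MeasurableSet B → volume B < ENNReal.ofReal δ → (∫ s in B, ‖φ s‖) < ε)
    (t : ℝ) (ht : t ∈ Set.Ioc 0 T) :
    IsCompact (closure ((fun φ : ℝ → E => ∫ s in (0:ℝ)..t, S (t - s) (φ s)) '' H)) := by
  obtain ⟨ht0, htT⟩ := ht
  rcases H.eq_empty_or_nonempty with hHe | ⟨φ₀, hφ₀⟩
  · simp [hHe]
  obtain ⟨C, hC⟩ := hHbd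
  have hC0 : (0:ℝ) ≤ C :=
    le_trans (integral_nonneg fun s => norm_nonneg _) (hC φ₀ hφ₀)
  -- uniform bound on the operator norms via Banach-Steinhaus
  obtain ⟨M, hM⟩ : ∃ M : ℝ, ∀ r ∈ Set.Icc (0:ℝ) T, ‖S r‖ ≤ M := by
    have hpt : ∀ x : E, ∃ C', ∀ i : Set.Icc (0:ℝ) T, ‖S i x‖ ≤ C' := by
      intro x
      obtain ⟨C', hC'⟩ := isCompact_Icc.exists_bound_of_continuousOn
        ((hScont x).mono (Set.Icc_subset_Ici_self : Set.Icc (0:ℝ) T ⊆ Set.Ici 0))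
      exact ⟨C', fun i => hC' i i.2⟩
    obtain ⟨M, hM⟩ := banach_steinhaus (g := fun r : Set.Icc (0:ℝ) T => S r) hpt
    exact ⟨M, fun r hr => hM ⟨r, hr⟩⟩
  set M₁ : ℝ := M + 1 with hM₁def
  have hM₁pos : 0 < M₁ := by
    have : (0:ℝ) ≤ M := le_trans (norm_nonneg _) (hM 0 ⟨le_refl _, hT.le⟩)
    linarith
  have hM₁ : ∀ r ∈ Set.Icc (0:ℝ) T, ‖S r‖ ≤ M₁ := fun r hr => by
    have := hM r hr; linarith
  -- clamped, jointly continuous version of the semigroup action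
  have clamp_cont : Continuous fun r : ℝ => min (max r 0) T :=
    (continuous_id.max continuous_const).min continuous_const
  have clamp_mem : ∀ r : ℝ, min (max r 0) T ∈ Set.Icc (0:ℝ) T := fun r =>
    ⟨le_min (le_max_right _ _) hT.le, min_le_right _ _⟩
  have hg : Continuous (fun p : E × ℝ => S (min (max p.2 0) T) p.1) := by
    apply continuous_prod_of_continuous_lipschitzWith _ M₁.toNNReal
    · intro x
      exact (hScont x).comp_continuous clamp_cont fun r => (clamp_mem r).1
    · intro r
      refine ((S (min (max r 0) T)).lipschitz).weaken ?_
      have h1 : ‖S (min (max r 0) T)‖ ≤ M₁ := hM₁ _ (clamp_mem r)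
      rw [← norm_toNNReal]
      exact Real.toNNReal_le_toNNReal h1
  -- integrability of the convolution integrands
  have key_int : ∀ φ ∈ H, ∀ c u : ℝ, 0 ≤ u → u ≤ c → c ≤ T →
      IntegrableOn (fun s => S (c - s) (φ s)) (Set.Ioc 0 u) := by
    intro φ hφ c u hu huc hcT
    have hsub : Set.Ioc (0:ℝ) u ⊆ Set.Icc 0 T := fun s hs =>
      ⟨hs.1.le, hs.2.trans (huc.trans hcT)⟩
    have hφi : IntegrableOn φ (Set.Ioc 0 u) := (hHint φ hφ).mono_set hsub
    have hmeas : AEStronglyMeasurable (fun s => S (c - s) (φ s))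
        (volume.restrict (Set.Ioc 0 u)) := by
      have h1 : AEStronglyMeasurable (fun s => ((φ s, c - s) : E × ℝ))
          (volume.restrict (Set.Ioc 0 u)) :=
        hφi.aestronglyMeasurable.prodMk
          ((continuous_const.sub continuous_id).aestronglyMeasurable)
      have h2 := hg.comp_aestronglyMeasurable h1
      refine h2.congr ?_
      filter_upwards [ae_restrict_mem measurableSet_Ioc] with s hs
      have h3 : min (max (c - s) 0) T = c - s := by
        rw [max_eq_left (by linarith [hs.1, hs.2] : (0:ℝ) ≤ c - s),
          min_eq_left (by linarith [hs.1] : c - s ≤ T)]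
      simp only [h3]
    refine Integrable.mono' ((hφi.norm).const_mul M₁) hmeas ?_
    filter_upwards [ae_restrict_mem measurableSet_Ioc] with s hs
    calc ‖S (c - s) (φ s)‖ ≤ ‖S (c - s)‖ * ‖φ s‖ := (S (c - s)).le_opNorm _
      _ ≤ M₁ * ‖φ s‖ := by
          refine mul_le_mul_of_nonneg_right
            (hM₁ _ ⟨by linarith [hs.1, hs.2], by linarith [hs.1]⟩) (norm_nonneg _)
  -- norm bound for partial convolution integrals
  have key_bd : ∀ φ ∈ H, ∀ c u u' : ℝ, 0 ≤ u → u ≤ u' → u' ≤ c → c ≤ T →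
      ‖∫ s in u..u', S (c - s) (φ s)‖ ≤ M₁ * ∫ s in Set.Ioc u u', ‖φ s‖ := by
    intro φ hφ c u u' hu huu' hu'c hcT
    rw [intervalIntegral.integral_of_le huu']
    calc ‖∫ s in Set.Ioc u u', S (c - s) (φ s)‖
        ≤ ∫ s in Set.Ioc u u', M₁ * ‖φ s‖ := by
          refine norm_integral_le_of_norm_le
            ((((hHint φ hφ).mono_set (fun s hs =>
              ⟨hu.trans hs.1.le, hs.2.trans (hu'c.trans hcT)⟩)).norm).const_mul M₁) ?_
          filter_upwards [ae_restrict_mem measurableSet_Ioc] with s hs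
          calc ‖S (c - s) (φ s)‖ ≤ ‖S (c - s)‖ * ‖φ s‖ := (S (c - s)).le_opNorm _
            _ ≤ M₁ * ‖φ s‖ := mul_le_mul_of_nonneg_right
                (hM₁ _ ⟨by linarith [hs.1, hs.2, hs.2.trans hu'c],
                  by linarith [hu.trans hs.1.le]⟩) (norm_nonneg _)
      _ = M₁ * ∫ s in Set.Ioc u u', ‖φ s‖ := integral_const_mul _ _
  -- total boundedness
  refine TotallyBounded.isCompact_of_isClosed ?_ isClosed_closure
  refine TotallyBounded.closure ?_
  rw [Metric.totallyBounded_iff]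
  intro ε hε
  obtain ⟨δ, hδ0, hδ⟩ := hHui (ε / (4 * M₁)) (by positivity)
  set a : ℝ := min δ t / 2 with ha_def
  have ha0 : 0 < a := by positivity
  have haδ : a < δ := by
    have : min δ t ≤ δ := min_le_left _ _
    simp only [ha_def]; linarith
  have hat : a < t := by
    have : min δ t ≤ t := min_le_right _ _
    simp only [ha_def]; linarith
  set b : ℝ := t - a with hb_def
  have hb0 : 0 ≤ b := by simp only [hb_def]; linarith
  have hbt : b ≤ t := by simp only [hb_def]; linarith
  have hbT : b ≤ T := hbt.trans htT
  -- the bounded set of pre-images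
  set A : Set E := (fun φ : ℝ → E => ∫ s in (0:ℝ)..b, S (b - s) (φ s)) '' H with hA_def
  have hAbd : Bornology.IsBounded A := by
    rw [Metric.isBounded_iff_subset_closedBall 0]
    refine ⟨M₁ * C, ?_⟩
    rintro x ⟨φ, hφ, rfl⟩
    rw [Metric.mem_closedBall, dist_zero_right]
    calc ‖∫ s in (0:ℝ)..b, S (b - s) (φ s)‖
        ≤ M₁ * ∫ s in Set.Ioc (0:ℝ) b, ‖φ s‖ :=
          key_bd φ hφ b 0 b le_rfl hb0 le_rfl hbT
      _ ≤ M₁ * C := by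
          refine mul_le_mul_of_nonneg_left (le_trans ?_ (hC φ hφ)) hM₁pos.le
          refine setIntegral_mono_set ((hHint φ hφ).norm) ?_ ?_
          · filter_upwards with s using norm_nonneg _
          · filter_upwards with s hs using ⟨hs.1.le, hs.2.trans hbT⟩
  have hK : IsCompact (closure (S a '' A)) :=
    (hScomp a ha0).isCompact_closure_image_of_bounded hAbd
  obtain ⟨F, hFfin, hFcover⟩ :=
    Metric.totallyBounded_iff.mp hK.totallyBounded (ε / 2) (by positivity)
  refine ⟨F, hFfin, ?_⟩
  rintro x ⟨φ, hφ, rfl⟩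
  -- interval integrabilities
  have hint0b : IntervalIntegrable (fun s => S (t - s) (φ s)) volume 0 b := by
    rw [intervalIntegrable_iff_integrableOn_Ioc_of_le hb0]
    exact key_int φ hφ t b hb0 hbt htT
  have hintbt : IntervalIntegrable (fun s => S (t - s) (φ s)) volume b t := by
    rw [intervalIntegrable_iff_integrableOn_Ioc_of_le hbt]
    exact (key_int φ hφ t t ht0.le le_rfl htT).mono_set
      (Set.Ioc_subset_Ioc hb0 le_rfl)
  have hint0b' : IntervalIntegrable (fun s => S (b - s) (φ s)) volume 0 b := by
    rw [intervalIntegrable_iff_integrableOn_Ioc_of_le hb0]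
    exact key_int φ hφ b b hb0 le_rfl hbT
  -- identify S a applied to the truncated integral
  have hCa : S a (∫ s in (0:ℝ)..b, S (b - s) (φ s)) = ∫ s in (0:ℝ)..b, S (t - s) (φ s) := by
    rw [← (S a).intervalIntegral_comp_comm hint0b']
    refine intervalIntegral.integral_congr fun s hs => ?_
    rw [Set.uIcc_of_le hb0] at hs
    have h1 : S (a + (b - s)) = (S a).comp (S (b - s)) :=
      hSadd a (b - s) ha0.le (by linarith [hs.2])
    have h2 : a + (b - s) = t - s := by simp only [hb_def]; ring
    rw [h2] at h1
    simp [h1]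
  -- the approximation estimate
  have hdist : dist (∫ s in (0:ℝ)..t, S (t - s) (φ s))
      (S a (∫ s in (0:ℝ)..b, S (b - s) (φ s))) < ε / 2 := by
    rw [hCa, dist_eq_norm, intervalIntegral.integral_interval_sub_left
      (hint0b.trans hintbt) hint0b]
    calc ‖∫ s in b..t, S (t - s) (φ s)‖
        ≤ M₁ * ∫ s in Set.Ioc b t, ‖φ s‖ := key_bd φ hφ t b t hb0 hbt le_rfl htT
      _ < M₁ * (ε / (4 * M₁)) := by
          refine mul_lt_mul_of_pos_left ?_ hM₁pos
          refine hδ φ hφ (Set.Ioc b t) (fun s hs => ⟨hb0.trans hs.1.le, hs.2.trans htT⟩)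
            measurableSet_Ioc ?_
          rw [Real.volume_Ioc]
          have : t - b = a := by simp only [hb_def]; ring
          rw [this]
          exact ENNReal.ofReal_lt_ofReal_iff_of_nonneg ha0.le |>.mpr haδ
      _ = ε / 4 := by field_simp
      _ < ε / 2 := by linarith
  -- conclude
  have hmem : S a (∫ s in (0:ℝ)..b, S (b - s) (φ s)) ∈ closure (S a '' A) :=
    subset_closure ⟨_, ⟨φ, hφ, rfl⟩, rfl⟩
  obtain ⟨y, hyF, hy⟩ := Set.mem_iUnion₂.mp (hFcover hmem)
  refine Set.mem_iUnion₂.mpr ⟨y, hyF, ?_⟩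
  rw [Metric.mem_ball] at hy ⊢
  calc dist (∫ s in (0:ℝ)..t, S (t - s) (φ s)) y
      ≤ dist (∫ s in (0:ℝ)..t, S (t - s) (φ s))
          (S a (∫ s in (0:ℝ)..b, S (b - s) (φ s))) +
        dist (S a (∫ s in (0:ℝ)..b, S (b - s) (φ s))) y := dist_triangle _ _ _
    _ < ε / 2 + ε / 2 := add_lt_add hdist hy
    _ = ε := by ring
end

section
/- Let S be a strongly continuous semigroup on L¹(G) and η ∈ L¹(0,T; L¹(G)) be such that ∫₀ᵗ S(t−s) η(s) ds = 0 for every t ∈ [0,T]. Then η = 0 almost everywhere on [0,T]. -/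
open MeasureTheory Set Filter Topology Metric

lemma aux_scont {E : Type*} [NormedAddCommGroup E] [NormedSpace ℝ E]
    (S : ℝ → E →L[ℝ] E)
    (hScont : ∀ x : E, ContinuousOn (fun t => S t x) (Set.Ici 0)) (x : E) :
    Continuous (fun t : ℝ => S (max t 0) x) :=
  (hScont x).comp_continuous (continuous_id.max continuous_const)
    (fun t => Set.mem_Ici.2 (le_max_right t 0))

lemma aux_bound {E : Type*} [NormedAddCommGroup E] [NormedSpace ℝ E] [CompleteSpace E]
    (S : ℝ → E →L[ℝ] E)
    (hScont : ∀ x : E, ContinuousOn (fun t => S t x) (Set.Ici 0)) (a b : ℝ) :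
    ∃ M : ℝ, ∀ t ∈ Set.Icc a b, ‖S (max t 0)‖ ≤ M := by
  have hpt : ∀ x : E, ∃ C, ∀ t : Set.Icc a b, ‖S (max (t : ℝ) 0) x‖ ≤ C := by
    intro x
    obtain ⟨C, hC⟩ := (isCompact_Icc (a := a) (b := b)).exists_bound_of_continuousOn
      (aux_scont S hScont x).continuousOn
    exact ⟨C, fun i => hC i i.2⟩
  obtain ⟨M, hM⟩ := banach_steinhaus hpt
  exact ⟨M, fun t ht => hM ⟨t, ht⟩⟩

lemma aux_jointcont {E : Type*} [NormedAddCommGroup E] [NormedSpace ℝ E] [CompleteSpace E]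
    (S : ℝ → E →L[ℝ] E)
    (hScont : ∀ x : E, ContinuousOn (fun t => S t x) (Set.Ici 0)) :
    Continuous (fun p : ℝ × E => S (max p.1 0) p.2) := by
  rw [continuous_iff_continuousAt]
  rintro ⟨t₀, x₀⟩
  obtain ⟨M, hM⟩ := aux_bound S hScont (t₀ - 1) (t₀ + 1)
  have h2 : Tendsto (fun p : ℝ × E => S (max p.1 0) x₀ - S (max t₀ 0) x₀)
      (𝓝 (t₀, x₀)) (𝓝 0) := by
    have := (((aux_scont S hScont x₀).comp continuous_fst).tendsto (t₀, x₀)).sub_const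
      (S (max t₀ 0) x₀)
    simpa using this
  have h1 : Tendsto (fun p : ℝ × E => S (max p.1 0) (p.2 - x₀)) (𝓝 (t₀, x₀)) (𝓝 0) := by
    have hg : Tendsto (fun p : ℝ × E => M * ‖p.2 - x₀‖) (𝓝 (t₀, x₀)) (𝓝 0) := by
      have hcont : Continuous (fun p : ℝ × E => M * ‖p.2 - x₀‖) :=
        continuous_const.mul ((continuous_snd.sub continuous_const).norm)
      have := hcont.tendsto (t₀, x₀)
      simpa using this
    refine squeeze_zero_norm' ?_ hg
    have hev : ∀ᶠ p : ℝ × E in 𝓝 (t₀, x₀), p.1 ∈ Set.Icc (t₀ - 1) (t₀ + 1) :=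
      continuous_fst.tendsto (t₀, x₀) (Icc_mem_nhds (by linarith) (by linarith))
    filter_upwards [hev] with p hp
    exact ((S (max p.1 0)).le_opNorm _).trans
      (mul_le_mul_of_nonneg_right (hM _ hp) (norm_nonneg _))
  have h3 := (h1.add h2).add_const (S (max t₀ 0) x₀)
  have key : ∀ p : ℝ × E,
      S (max p.1 0) (p.2 - x₀) + (S (max p.1 0) x₀ - S (max t₀ 0) x₀) + S (max t₀ 0) x₀
        = S (max p.1 0) p.2 := by
    intro p
    rw [map_sub]
    abel
  unfold ContinuousAt
  simp only [key] at h3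
  simpa using h3

/-- If `S` is a strongly continuous semigroup on a Banach space (e.g. `L¹(G)`)
and `η ∈ L¹(0,T;E)` satisfies `∫₀ᵗ S(t-s) η(s) ds = 0` for every `t ∈ [0,T]`,
then `η = 0` almost everywhere on `[0,T]`. -/
theorem stmt12 {E : Type*} [NormedAddCommGroup E] [NormedSpace ℝ E] [CompleteSpace E]
    (S : ℝ → E →L[ℝ] E) (hS0 : S 0 = 1)
    (hSadd : ∀ s t : ℝ, 0 ≤ s → 0 ≤ t → S (s + t) = (S s).comp (S t))
    (hScont : ∀ x : E, ContinuousOn (fun t => S t x) (Set.Ici 0))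
    (T : ℝ) (hT : 0 < T)
    (η : ℝ → E) (hη : IntegrableOn η (Set.Icc 0 T))
    (hconv : ∀ t ∈ Set.Icc (0:ℝ) T, (∫ s in (0:ℝ)..t, S (t - s) (η s)) = 0) :
    ∀ᵐ s ∂(volume.restrict (Set.Icc (0:ℝ) T)), η s = 0 := by
  set f : ℝ → ℝ → E := fun c s => S (max (c - s) 0) (η s) with hf
  have Fcont := aux_jointcont S hScont
  -- measurability
  have fmeas : ∀ c : ℝ, AEStronglyMeasurable (f c) (volume.restrict (Set.Icc 0 T)) := by
    intro c
    have h : AEStronglyMeasurable (fun s => ((c - s : ℝ), η s))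
        (volume.restrict (Set.Icc 0 T)) :=
      ((continuous_const.sub continuous_id).aestronglyMeasurable).prodMk hη.aestronglyMeasurable
    exact Fcont.comp_aestronglyMeasurable h
  -- integrability
  obtain ⟨M, hM⟩ := aux_bound S hScont (-T) T
  have fint : ∀ c ∈ Set.Icc (0:ℝ) T, IntegrableOn (f c) (Set.Icc 0 T) := by
    intro c hc
    refine Integrable.mono' (hη.norm.const_mul M) (fmeas c) ?_
    filter_upwards [ae_restrict_mem measurableSet_Icc] with s hs
    refine ((S (max (c - s) 0)).le_opNorm _).trans
      (mul_le_mul_of_nonneg_right (hM _ ⟨by linarith [hc.1, hs.2], by linarith [hc.2, hs.1]⟩)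
        (norm_nonneg _))
  have fii : ∀ c ∈ Set.Icc (0:ℝ) T, ∀ u ∈ Set.Icc (0:ℝ) T, ∀ v ∈ Set.Icc (0:ℝ) T,
      IntervalIntegrable (f c) volume u v := by
    intro c hc u hu v hv
    rw [intervalIntegrable_iff]
    exact (fint c hc).mono_set (Set.uIoc_subset_uIcc.trans (Set.uIcc_subset_Icc hu hv))
  have h0T : (0:ℝ) ∈ Set.Icc (0:ℝ) T := ⟨le_refl 0, hT.le⟩
  -- rewrite hypothesis
  have hconv' : ∀ t ∈ Set.Icc (0:ℝ) T, (∫ s in (0:ℝ)..t, f t s) = 0 := by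
    intro t ht
    rw [← hconv t ht]
    apply intervalIntegral.integral_congr
    intro s hs
    rw [Set.uIcc_of_le ht.1] at hs
    simp only [hf, max_eq_left (by linarith [hs.1, hs.2] : (0:ℝ) ≤ t - s)]
  -- step 1
  have claim1 : ∀ q ∈ Set.Icc (0:ℝ) T, ∀ a, 0 ≤ a → a ≤ q →
      (∫ s in (0:ℝ)..a, f q s) = 0 := by
    intro q hq a ha haq
    have haT : a ∈ Set.Icc (0:ℝ) T := ⟨ha, haq.trans hq.2⟩
    have key : (∫ s in (0:ℝ)..a, f q s) = S (q - a) (∫ s in (0:ℝ)..a, f a s) := by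
      rw [← (S (q - a)).intervalIntegral_comp_comm (fii a haT 0 h0T a haT)]
      apply intervalIntegral.integral_congr
      intro s hs
      rw [Set.uIcc_of_le ha] at hs
      have h3 := hSadd (q - a) (a - s) (by linarith) (by linarith [hs.1, hs.2])
      have h4 : q - a + (a - s) = q - s := by ring
      rw [h4] at h3
      simp only [hf, max_eq_left (by linarith [hs.1, hs.2] : (0:ℝ) ≤ a - s),
        max_eq_left (by linarith [hs.1, hs.2] : (0:ℝ) ≤ q - s), h3,
        ContinuousLinearMap.comp_apply]
    rw [key, hconv' a haT, map_zero]
  -- step 2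
  have claim2 : ∀ q ∈ Set.Icc (0:ℝ) T, ∀ a b, 0 ≤ a → a ≤ b → b ≤ q →
      (∫ s in a..b, f q s) = 0 := by
    intro q hq a b ha hab hbq
    have haT : a ∈ Set.Icc (0:ℝ) T := ⟨ha, (hab.trans hbq).trans hq.2⟩
    have hbT : b ∈ Set.Icc (0:ℝ) T := ⟨ha.trans hab, hbq.trans hq.2⟩
    have h := intervalIntegral.integral_add_adjacent_intervals
      (fii q hq 0 h0T a haT) (fii q hq a haT b hbT)
    rw [claim1 q hq a ha (hab.trans hbq), claim1 q hq b (ha.trans hab) hbq] at h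
    simpa using h
  -- step 3 : Lebesgue differentiation
  have indzero : ∀ q ∈ Set.Icc (0:ℝ) T,
      ∀ᵐ x ∂(volume : Measure ℝ), (Set.Icc (0:ℝ) q).indicator (f q) x = 0 := by
    intro q hq
    have gint : Integrable ((Set.Icc (0:ℝ) q).indicator (f q)) volume :=
      ((fint q hq).mono_set (Set.Icc_subset_Icc le_rfl hq.2)).integrable_indicator
        measurableSet_Icc
    have hzero : ∀ x r : ℝ, (∫ y in closedBall x r, (Set.Icc (0:ℝ) q).indicator (f q) y) = 0 := by
      intro x r
      rw [Real.closedBall_eq_Icc, setIntegral_indicator measurableSet_Icc, Set.Icc_inter_Icc]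
      rcases le_or_gt (max (x - r) 0) (min (x + r) q) with h | h
      · rw [integral_Icc_eq_integral_Ioc, ← intervalIntegral.integral_of_le h]
        exact claim2 q hq _ _ (le_max_right _ _) h (min_le_right _ _)
      · rw [Set.Icc_eq_empty (not_le.2 h)]
        simp
    filter_upwards [(Besicovitch.vitaliFamily (volume : Measure ℝ)).ae_tendsto_average
      gint.locallyIntegrable] with x hx
    have h2 : Tendsto (fun r : ℝ => ⨍ y in closedBall x r, (Set.Icc (0:ℝ) q).indicator (f q) y)
        (𝓝[>] 0) (𝓝 ((Set.Icc (0:ℝ) q).indicator (f q) x)) :=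
      hx.comp (Besicovitch.tendsto_filterAt volume x)
    have h3 : (fun r : ℝ => ⨍ y in closedBall x r, (Set.Icc (0:ℝ) q).indicator (f q) y)
        = fun _ => 0 := by
      funext r
      rw [setAverage_eq, hzero x r, smul_zero]
    rw [h3] at h2
    exact (tendsto_nhds_unique tendsto_const_nhds h2).symm
  -- combine over rationals
  have hTne : ∀ᵐ x ∂(volume.restrict (Set.Icc (0:ℝ) T)), x ≠ T := by
    refine ae_restrict_of_ae ?_
    rw [ae_iff]
    have : {x : ℝ | ¬ x ≠ T} = {T} := by ext x; simp
    rw [this]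
    exact measure_singleton T
  have hall : ∀ᵐ x ∂(volume.restrict (Set.Icc (0:ℝ) T)), ∀ qq : ℚ,
      (qq : ℝ) ∈ Set.Icc (0:ℝ) T → (Set.Icc (0:ℝ) (qq:ℝ)).indicator (f (qq:ℝ)) x = 0 := by
    rw [ae_all_iff]
    intro qq
    by_cases hq : (qq : ℝ) ∈ Set.Icc (0:ℝ) T
    · filter_upwards [ae_restrict_of_ae (indzero _ hq)] with x hx _
      exact hx
    · filter_upwards with x hx
      exact absurd hx hq
  filter_upwards [hall, hTne, ae_restrict_mem measurableSet_Icc] with s hs hsT hsmem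
  have hsltT : s < T := lt_of_le_of_ne hsmem.2 hsT
  have hx : ∀ n : ℕ, ∃ qq : ℚ, s < (qq : ℝ) ∧ (qq : ℝ) < min T (s + 1/(n+1)) := by
    intro n
    apply exists_rat_btwn
    apply lt_min hsltT
    have : (0:ℝ) < 1/(n+1) := by positivity
    linarith
  choose q hq1 hq2 using hx
  have hq0 : ∀ n, (0:ℝ) ≤ (q n : ℝ) - s := fun n => by linarith [hq1 n]
  have hzero : ∀ n, S ((q n : ℝ) - s) (η s) = 0 := by
    intro n
    have hqmem : (q n : ℝ) ∈ Set.Icc (0:ℝ) T :=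
      Set.mem_Icc.2 ⟨hsmem.1.trans (hq1 n).le, ((lt_min_iff.1 (hq2 n)).1).le⟩
    have h := hs (q n) hqmem
    rw [Set.indicator_of_mem (Set.mem_Icc.2 ⟨hsmem.1, (hq1 n).le⟩)] at h
    simp only [hf] at h
    rwa [max_eq_left (hq0 n)] at h
  have hlim : Tendsto (fun n => S ((q n : ℝ) - s) (η s)) atTop (𝓝 (η s)) := by
    have hc : ContinuousWithinAt (fun r => S r (η s)) (Set.Ici 0) 0 :=
      (hScont (η s)) 0 Set.self_mem_Ici
    have ht : Tendsto (fun n => (q n : ℝ) - s) atTop (𝓝[Set.Ici 0] 0) := by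
      rw [tendsto_nhdsWithin_iff]
      constructor
      · refine squeeze_zero (fun n => hq0 n) (fun n => ?_)
          tendsto_one_div_add_atTop_nhds_zero_nat
        have := (lt_min_iff.1 (hq2 n)).2
        linarith
      · filter_upwards with n
        exact hq0 n
    have := hc.tendsto.comp ht
    simpa [hS0, Function.comp_def] using this
  simp only [hzero] at hlim
  exact (tendsto_nhds_unique tendsto_const_nhds hlim).symm
end
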